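/- arXiv:1909.03779 — 9 statements merged into one kernel-verified Lean document; each statement's English description precedes it below -/
import Mathlib

section
/- For every finitely generated rational line free cone C ⊆ ℝ^e, there exists an additive total order on ℤ^e compatible with C. -/
lemma aux_nsmul {G : Type*} [AddCommGroup G] (P : Set G) (h0 : (0:G) ∈ P)
    (hadd : ∀ a ∈ P, ∀ b ∈ P, a + b ∈ P) : ∀ (n : ℕ) (a : G), a ∈ P → n • a ∈ P := by
  intro n a ha
  induction n with
  | zero => simpa using h0
  | succ n ih => rw [succ_nsmul]; exact hadd _ ih _ ha

lemma aux_total {G : Type*} [AddCommGroup G] [NoZeroSMulDivisors ℤ G]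
    (B : Set G) (h0 : (0:G) ∈ B) (hadd : ∀ a ∈ B, ∀ b ∈ B, a + b ∈ B)
    (hpt : ∀ a ∈ B, -a ∈ B → a = 0) :
    ∃ P : Set G, B ⊆ P ∧ (0:G) ∈ P ∧ (∀ a ∈ P, ∀ b ∈ P, a + b ∈ P) ∧
      (∀ a ∈ P, -a ∈ P → a = 0) ∧ (∀ x : G, x ∈ P ∨ -x ∈ P) := by
  set S : Set (Set G) := {P | B ⊆ P ∧ (0:G) ∈ P ∧ (∀ a ∈ P, ∀ b ∈ P, a + b ∈ P) ∧
      (∀ a ∈ P, -a ∈ P → a = 0)} with hS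
  have hBS : B ∈ S := ⟨subset_rfl, h0, hadd, hpt⟩
  have hub : ∀ c ⊆ S, IsChain (· ⊆ ·) c → c.Nonempty → ∃ ub ∈ S, ∀ s ∈ c, s ⊆ ub := by
    intro c hcS hchain hcne
    refine ⟨⋃₀ c, ⟨?_, ?_, ?_, ?_⟩, fun P hP => Set.subset_sUnion_of_mem hP⟩
    · obtain ⟨P, hP⟩ := hcne
      exact (hcS hP).1.trans (Set.subset_sUnion_of_mem hP)
    · obtain ⟨P, hP⟩ := hcne
      exact ⟨P, hP, (hcS hP).2.1⟩
    · rintro a ⟨P, hP, haP⟩ b ⟨Q, hQ, hbQ⟩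
      rcases hchain.total hP hQ with h | h
      · exact ⟨Q, hQ, (hcS hQ).2.2.1 _ (h haP) _ hbQ⟩
      · exact ⟨P, hP, (hcS hP).2.2.1 _ haP _ (h hbQ)⟩
    · rintro a ⟨P, hP, haP⟩ ⟨Q, hQ, hnaQ⟩
      rcases hchain.total hP hQ with h | h
      · exact (hcS hQ).2.2.2 _ (h haP) hnaQ
      · exact (hcS hP).2.2.2 _ haP (h hnaQ)
  obtain ⟨P, hBP, hmax⟩ := zorn_subset_nonempty S hub B hBS
  obtain ⟨hBP', hP0, hPadd, hPpt⟩ := hmax.1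
  refine ⟨P, hBP', hP0, hPadd, hPpt, ?_⟩
  intro x
  by_contra hx
  push_neg at hx
  obtain ⟨hx1, hx2⟩ := hx
  -- helper: adjoining y to P fails pointedness, extract relation
  have key : ∀ y : G, y ∉ P → ∃ r ∈ P, ∃ N : ℕ, 0 < N ∧ r + N • y = 0 := by
    intro y hy
    set Q : Set G := {z | ∃ p ∈ P, ∃ n : ℕ, z = p + n • y} with hQ
    have hPQ : P ⊆ Q := fun p hp => ⟨p, hp, 0, by simp⟩
    have hQS : Q ∉ S := by
      intro hQS
      exact hy (hmax.2 hQS hPQ ⟨0, hP0, 1, by simp⟩)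
    have hQ0 : (0:G) ∈ Q := hPQ hP0
    have hQB : B ⊆ Q := fun b hb => hPQ (hBP' hb)
    have hQadd : ∀ a ∈ Q, ∀ b ∈ Q, a + b ∈ Q := by
      rintro a ⟨p, hp, n, rfl⟩ b ⟨q, hq, m, rfl⟩
      exact ⟨p + q, hPadd _ hp _ hq, n + m, by rw [add_nsmul]; abel⟩
    -- so pointedness fails
    have : ∃ a ∈ Q, -a ∈ Q ∧ a ≠ 0 := by
      by_contra h
      push_neg at h
      exact hQS ⟨hQB, hQ0, hQadd, h⟩
    obtain ⟨a, ⟨p, hp, n, rfl⟩, ⟨q, hq, m, hm⟩, hne⟩ := this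
    have hrel : (p + q) + (n + m) • y = 0 := by
      have : -(p + n • y) = q + m • y := hm
      rw [add_nsmul]
      linear_combination (norm := abel) -this - hm + hm
    rcases Nat.eq_zero_or_pos (n + m) with h1 | h1
    · exfalso
      obtain ⟨rfl, rfl⟩ := Nat.add_eq_zero.mp h1
      simp only [zero_smul, add_zero] at hrel hne hm
      exact hne (hPpt p hp (by rw [← hm] at hq; exact hq))
    · exact ⟨p + q, hPadd _ hp _ hq, n + m, h1, hrel⟩
  obtain ⟨r, hr, N, hN, hrel⟩ := key x hx1
  obtain ⟨r', hr', N', hN', hrel'⟩ := key (-x) hx2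
  -- from hrel : r + N • x = 0 ; from hrel' : r' + N' • (-x) = 0
  have hNx : N • x = -r := eq_neg_of_add_eq_zero_right hrel
  have hN'x : N' • x = r' := by
    have h := hrel'
    rw [smul_neg, add_neg_eq_zero] at h
    exact h.symm
  have hcalc : N • r' = -(N' • r) := by
    rw [← hN'x, smul_comm, hNx, smul_neg]
  have h1 : N • r' ∈ P := aux_nsmul P hP0 hPadd N r' hr'
  have h2 : -(N • r') ∈ P := by
    rw [hcalc, neg_neg]; exact aux_nsmul P hP0 hPadd N' r hr
  have h3 : N • r' = 0 := hPpt _ h1 h2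
  have hr'0 : r' = 0 := by
    have h4 : (N : ℤ) • r' = 0 := by rwa [natCast_zsmul]
    rcases smul_eq_zero.mp h4 with h | h
    · exact absurd (Int.natCast_eq_zero.mp h) hN.ne'
    · exact h
  have hx0 : x = 0 := by
    have h5 : (N' : ℤ) • x = 0 := by rw [natCast_zsmul, hN'x, hr'0]
    rcases smul_eq_zero.mp h5 with h | h
    · exact absurd (Int.natCast_eq_zero.mp h) hN'.ne'
    · exact h
  exact hx1 (hx0 ▸ hP0)

/-- for every finitely generated rational line free cone `C ⊆ ℝ^e`
there exists an additive total order on `ℤ^e` compatible with `C`. -/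
theorem stmt_2 (e k : ℕ) (C : Set (Fin e → ℝ)) (s : Fin k → Fin e → ℚ)
    (hC : C = {x | ∃ l : Fin k → ℝ, (∀ i, 0 ≤ l i) ∧
      x = ∑ i, l i • (fun j => (s i j : ℝ))})
    (hfree : ∀ v ∈ C, v ≠ 0 → -v ∉ C) :
    ∃ le : (Fin e → ℤ) → (Fin e → ℤ) → Prop, IsLinearOrder (Fin e → ℤ) le ∧
      (∀ m n p : Fin e → ℤ, le m n → le (m + p) (n + p)) ∧
      (∀ m : Fin e → ℤ, (fun i => (m i : ℝ)) ∈ C → le 0 m) := by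
  set B : Set (Fin e → ℤ) := {m | (fun i => (m i : ℝ)) ∈ C} with hB
  have h0 : (0 : Fin e → ℤ) ∈ B := by
    show (fun i => ((0 : Fin e → ℤ) i : ℝ)) ∈ C
    rw [hC]
    refine ⟨0, fun i => le_refl 0, ?_⟩
    funext j; simp
  have hadd : ∀ a ∈ B, ∀ b ∈ B, a + b ∈ B := by
    intro a ha b hb
    have ha' : (fun i => (a i : ℝ)) ∈ C := ha
    have hb' : (fun i => (b i : ℝ)) ∈ C := hb
    show (fun i => ((a + b) i : ℝ)) ∈ C
    rw [hC] at ha' hb' ⊢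
    obtain ⟨l, hl, hx⟩ := ha'
    obtain ⟨l', hl', hx'⟩ := hb'
    refine ⟨l + l', fun i => add_nonneg (hl i) (hl' i), ?_⟩
    have hsum : (fun i => ((a + b) i : ℝ)) =
        (fun i => (a i : ℝ)) + (fun i => (b i : ℝ)) := by
      funext i; simp [Pi.add_apply]
    rw [hsum, hx, hx', ← Finset.sum_add_distrib]
    exact Finset.sum_congr rfl fun i _ => by rw [Pi.add_apply, add_smul]
  have hpt : ∀ a ∈ B, -a ∈ B → a = 0 := by
    intro a ha hna
    by_contra hne
    have hv : (fun i => (a i : ℝ)) ≠ 0 := by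
      intro h
      apply hne
      funext i
      have h2 := congrFun h i
      simp only [Pi.zero_apply] at h2 ⊢
      exact_mod_cast h2
    apply hfree _ ha hv
    have hneg : (fun i => ((-a) i : ℝ)) = -(fun i => (a i : ℝ)) := by
      funext i; simp [Pi.neg_apply]
    have hna' : (fun i => ((-a) i : ℝ)) ∈ C := hna
    rwa [hneg] at hna'
  obtain ⟨P, hBP, hP0, hPadd, hPpt, hPtot⟩ := aux_total B h0 hadd hpt
  refine ⟨fun m n => n - m ∈ P, ?_, ?_, ?_⟩
  · exact
      { refl := fun a => by simpa using hP0
        trans := fun a b c hab hbc => by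
          have h := hPadd _ hbc _ hab
          rwa [sub_add_sub_cancel] at h
        antisymm := fun a b hab hba => by
          have h := hPpt _ hab (by rwa [neg_sub])
          exact (sub_eq_zero.mp h).symm
        total := fun a b => by
          rcases hPtot (b - a) with h | h
          · exact Or.inl h
          · exact Or.inr (by rwa [neg_sub] at h) }
  · intro m n p h
    simpa using h
  · intro m hm
    simpa using hBP (show m ∈ B from hm)
end

section
/- Let n = d₁ > d₂ > ... > d_h be integers with d_{i+1} | d_i, set e_i = d_i/d_{i+1} for i < h and e_h = +∞, and for each i let G_i ∈ R[Y] be monic of degree n/d_i. Then every polynomial f ∈ R[Y] can be written uniquely as f = Σ_{b ∈ B} c_b G₁^{b₁}···G_h^{b_h} with c_b ∈ R, where B = {b ∈ ℕ^h : 0 ≤ b_i < e_i for all i}. -/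
open Finset

lemma mixed_mpos (m e : ℕ → ℕ) (t : ℕ) (hm0 : m 0 = 1)
    (hme : ∀ i < t, m (i+1) = m i * e i) (he : ∀ i < t, 0 < e i) :
    ∀ j ≤ t, 0 < m j := by
  intro j
  induction j with
  | zero => intro _; omega
  | succ j IH =>
    intro hj
    rw [hme j (by omega)]
    exact Nat.mul_pos (IH (by omega)) (he j (by omega))

lemma mixed_prefix_lt (m e b : ℕ → ℕ) (t : ℕ) (hm0 : m 0 = 1)
    (hme : ∀ i < t, m (i+1) = m i * e i) (he : ∀ i < t, 0 < e i)
    (hb : ∀ i < t, b i < e i) :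
    ∀ j ≤ t, ∑ i ∈ Finset.range j, b i * m i < m j := by
  intro j
  induction j with
  | zero => intro _; simp [hm0]
  | succ j IH =>
    intro hj
    rw [Finset.sum_range_succ, hme j (by omega)]
    have h1 : ∑ i ∈ Finset.range j, b i * m i < m j := IH (by omega)
    have h2 : b j + 1 ≤ e j := hb j (by omega)
    calc ∑ i ∈ Finset.range j, b i * m i + b j * m j
        < m j + b j * m j := by omega
      _ = (b j + 1) * m j := by ring
      _ ≤ e j * m j := Nat.mul_le_mul_right _ h2
      _ = m j * e j := Nat.mul_comm _ _

lemma mixed_inj_bounded (m e : ℕ → ℕ) (t : ℕ) (hm0 : m 0 = 1)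
    (hme : ∀ i < t, m (i+1) = m i * e i) (he : ∀ i < t, 0 < e i) :
    ∀ b b' : ℕ → ℕ, (∀ i < t, b i < e i) → (∀ i < t, b' i < e i) →
    (∑ i ∈ Finset.range t, b i * m i = ∑ i ∈ Finset.range t, b' i * m i) →
    ∀ i < t, b i = b' i := by
  induction t with
  | zero => intro _ _ _ _ _ i hi; omega
  | succ t IH =>
    intro b b' hb hb' hsum i hi
    have hme' : ∀ i < t, m (i+1) = m i * e i := fun i hi => hme i (by omega)
    have he' : ∀ i < t, 0 < e i := fun i hi => he i (by omega)
    have hpos : 0 < m t := mixed_mpos m e t hm0 hme' he' t le_rfl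
    have hp : ∑ i ∈ Finset.range t, b i * m i < m t :=
      mixed_prefix_lt m e b (t+1) hm0 hme he hb t (by omega)
    have hp' : ∑ i ∈ Finset.range t, b' i * m i < m t :=
      mixed_prefix_lt m e b' (t+1) hm0 hme he hb' t (by omega)
    rw [Finset.sum_range_succ, Finset.sum_range_succ] at hsum
    have hd : b t = b' t := by
      have e1 : (∑ i ∈ Finset.range t, b i * m i + b t * m t) / m t = b t := by
        rw [Nat.add_mul_div_right _ _ hpos, Nat.div_eq_of_lt hp, Nat.zero_add]
      have e2 : (∑ i ∈ Finset.range t, b' i * m i + b' t * m t) / m t = b' t := by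
        rw [Nat.add_mul_div_right _ _ hpos, Nat.div_eq_of_lt hp', Nat.zero_add]
      rw [← e1, ← e2, hsum]
    rcases Nat.lt_or_ge i t with h | h
    · refine IH hme' he' b b' (fun i hi => hb i (by omega)) (fun i hi => hb' i (by omega)) ?_ i h
      have : b t * m t = b' t * m t := by rw [hd]
      omega
    · have : i = t := by omega
      subst this; exact hd

lemma mixed_surj_bounded (m e : ℕ → ℕ) (t : ℕ) (hm0 : m 0 = 1)
    (hme : ∀ i < t, m (i+1) = m i * e i) (he : ∀ i < t, 0 < e i) :
    ∀ k < m t, ∃ b : ℕ → ℕ, (∀ i < t, b i < e i) ∧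
      ∑ i ∈ Finset.range t, b i * m i = k := by
  induction t with
  | zero =>
    intro k hk
    refine ⟨fun _ => 0, fun i hi => by omega, ?_⟩
    simp; omega
  | succ t IH =>
    intro k hk
    have hme' : ∀ i < t, m (i+1) = m i * e i := fun i hi => hme i (by omega)
    have he' : ∀ i < t, 0 < e i := fun i hi => he i (by omega)
    have hpos : 0 < m t := mixed_mpos m e t hm0 hme' he' t le_rfl
    have hq : k / m t < e t := by
      rw [Nat.div_lt_iff_lt_mul hpos, Nat.mul_comm]
      rw [hme t (by omega)] at hk
      omega
    obtain ⟨b', hb', hs'⟩ := IH hme' he' (k % m t) (Nat.mod_lt _ hpos)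
    refine ⟨fun i => if i = t then k / m t else b' i, ?_, ?_⟩
    · intro i hi
      by_cases h : i = t
      · simp [h, hq]
      · simpa [h] using hb' i (by omega)
    · rw [Finset.sum_range_succ]
      have : ∑ i ∈ Finset.range t, (if i = t then k / m t else b' i) * m i
          = ∑ i ∈ Finset.range t, b' i * m i := by
        refine Finset.sum_congr rfl fun i hi => ?_
        rw [Finset.mem_range] at hi
        simp [Nat.ne_of_lt hi]
      rw [this, hs']
      beta_reduce
      rw [if_pos rfl]
      have := Nat.mod_add_div' k (m t)
      omega

lemma mixed_inj (m e : ℕ → ℕ) (t : ℕ) (hm0 : m 0 = 1)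
    (hme : ∀ i < t, m (i+1) = m i * e i) (he : ∀ i < t, 0 < e i)
    (b b' : ℕ → ℕ) (hb : ∀ i < t, b i < e i) (hb' : ∀ i < t, b' i < e i)
    (hsum : ∑ i ∈ Finset.range (t+1), b i * m i
          = ∑ i ∈ Finset.range (t+1), b' i * m i) :
    ∀ i < t + 1, b i = b' i := by
  intro i hi
  have hpos : 0 < m t := mixed_mpos m e t hm0 hme he t le_rfl
  have hp : ∑ i ∈ Finset.range t, b i * m i < m t :=
    mixed_prefix_lt m e b t hm0 hme he hb t le_rfl
  have hp' : ∑ i ∈ Finset.range t, b' i * m i < m t :=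
    mixed_prefix_lt m e b' t hm0 hme he hb' t le_rfl
  rw [Finset.sum_range_succ, Finset.sum_range_succ] at hsum
  have hd : b t = b' t := by
    have e1 : (∑ i ∈ Finset.range t, b i * m i + b t * m t) / m t = b t := by
      rw [Nat.add_mul_div_right _ _ hpos, Nat.div_eq_of_lt hp, Nat.zero_add]
    have e2 : (∑ i ∈ Finset.range t, b' i * m i + b' t * m t) / m t = b' t := by
      rw [Nat.add_mul_div_right _ _ hpos, Nat.div_eq_of_lt hp', Nat.zero_add]
    rw [← e1, ← e2, hsum]
  rcases Nat.lt_or_ge i t with h | h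
  · refine mixed_inj_bounded m e t hm0 hme he b b' hb hb' ?_ i h
    have : b t * m t = b' t * m t := by rw [hd]
    omega
  · have : i = t := by omega
    subst this; exact hd

lemma mixed_surj (m e : ℕ → ℕ) (t : ℕ) (hm0 : m 0 = 1)
    (hme : ∀ i < t, m (i+1) = m i * e i) (he : ∀ i < t, 0 < e i) (k : ℕ) :
    ∃ b : ℕ → ℕ, (∀ i < t, b i < e i) ∧
      ∑ i ∈ Finset.range (t+1), b i * m i = k := by
  have hpos : 0 < m t := mixed_mpos m e t hm0 hme he t le_rfl
  obtain ⟨b', hb', hs'⟩ := mixed_surj_bounded m e t hm0 hme he (k % m t) (Nat.mod_lt _ hpos)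
  refine ⟨fun i => if i = t then k / m t else b' i, ?_, ?_⟩
  · intro i hi
    simpa [Nat.ne_of_lt hi] using hb' i hi
  · rw [Finset.sum_range_succ]
    have : ∑ i ∈ Finset.range t, (if i = t then k / m t else b' i) * m i
        = ∑ i ∈ Finset.range t, b' i * m i := by
      refine Finset.sum_congr rfl fun i hi => ?_
      rw [Finset.mem_range] at hi
      simp [Nat.ne_of_lt hi]
    rw [this, hs']
    beta_reduce
    rw [if_pos rfl]
    have := Nat.mod_add_div' k (m t)
    omega

open Finset Polynomial

def mfn (n t : ℕ) (d : Fin (t+1) → ℕ) : ℕ → ℕ :=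
  fun i => if hi : i < t+1 then n / d ⟨i, hi⟩ else 0

def efn (t : ℕ) (d : Fin (t+1) → ℕ) : ℕ → ℕ :=
  fun i => if hi : i+1 < t+1 then d ⟨i, Nat.lt_of_succ_lt hi⟩ / d ⟨i+1, hi⟩ else 1

def extfn (t : ℕ) (b : Fin (t+1) → ℕ) : ℕ → ℕ :=
  fun i => if hi : i < t+1 then b ⟨i, hi⟩ else 0

def Nfn (n t : ℕ) (d : Fin (t+1) → ℕ) (b : Fin (t+1) → ℕ) : ℕ :=
  ∑ i ∈ Finset.range (t+1), extfn t b i * mfn n t d i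

lemma aux_deg {R : Type*} [CommRing R] [IsDomain R] (n t : ℕ) (d : Fin (t+1) → ℕ)
    (G : Fin (t+1) → Polynomial R) (hG : ∀ i, (G i).Monic)
    (hGdeg : ∀ i, (G i).natDegree = n / d i) (b : Fin (t+1) → ℕ) :
    (∏ i, G i ^ b i).natDegree = Nfn n t d b := by
  rw [Polynomial.natDegree_prod _ _ (fun i _ => ((hG i).pow _).ne_zero)]
  have key : ∀ i : Fin (t+1), (G i ^ b i).natDegree = extfn t b i.val * mfn n t d i.val := by
    intro i
    rw [Polynomial.natDegree_pow, hGdeg]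
    simp [extfn, mfn, i.isLt]
  rw [Finset.sum_congr rfl (fun i _ => key i)]
  exact Fin.sum_univ_eq_sum_range (fun j => extfn t b j * mfn n t d j) (t+1)

lemma nat_div_mul_div (a b c : ℕ) (hc : 0 < c) (hcb : c ∣ b) (hba : b ∣ a) :
    a / c = a / b * (b / c) := by
  obtain ⟨x, rfl⟩ := hcb
  obtain ⟨y, rfl⟩ := hba
  rcases Nat.eq_zero_or_pos x with rfl | hx
  · simp
  · have hb : 0 < c * x := Nat.mul_pos hc hx
    rw [Nat.mul_div_cancel_left _ hb, Nat.mul_assoc, Nat.mul_div_cancel_left _ hc,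
      Nat.mul_div_cancel_left _ hc, Nat.mul_comm]
-- fixed below

lemma aux_basic (n t : ℕ) (d : Fin (t+1) → ℕ) (hh : 0 < t+1)
    (hd1 : d ⟨0, hh⟩ = n) (hdpos : ∀ i, 0 < d i)
    (hdvd : ∀ (i : ℕ) (hi : i+1 < t+1), d ⟨i+1, hi⟩ ∣ d ⟨i, Nat.lt_of_succ_lt hi⟩) :
    mfn n t d 0 = 1 ∧ (∀ i < t, mfn n t d (i+1) = mfn n t d i * efn t d i) ∧
      (∀ i < t, 0 < efn t d i) := by
  have hn : 0 < n := hd1 ▸ hdpos ⟨0, hh⟩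
  have hdn : ∀ (i : ℕ) (hi : i < t+1), d ⟨i, hi⟩ ∣ n := by
    intro i
    induction i with
    | zero => intro hi; exact dvd_of_eq hd1
    | succ i IH => intro hi; exact (hdvd i hi).trans (IH (Nat.lt_of_succ_lt hi))
  refine ⟨?_, ?_, ?_⟩
  · have h0 : (0:ℕ) < t+1 := hh
    have hd0 : d ⟨0, h0⟩ = n := hd1
    have hd0' : d 0 = n := by simpa using hd0
    simp [mfn, hd0', Nat.div_self hn]
  · intro i hi
    have hi1 : i + 1 < t + 1 := by omega
    have hi0 : i < t + 1 := by omega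
    simp only [mfn, efn, dif_pos hi1, dif_pos hi0]
    exact nat_div_mul_div n (d ⟨i, hi0⟩) (d ⟨i+1, hi1⟩) (hdpos _) (hdvd i hi1) (hdn i hi0)
  · intro i hi
    have hi1 : i + 1 < t + 1 := by omega
    simp only [efn, dif_pos hi1]
    exact Nat.div_pos (Nat.le_of_dvd (hdpos _) (hdvd i hi1)) (hdpos _)

lemma aux_Ninj (n t : ℕ) (d : Fin (t+1) → ℕ) (hh : 0 < t+1)
    (hd1 : d ⟨0, hh⟩ = n) (hdpos : ∀ i, 0 < d i)
    (hdvd : ∀ (i : ℕ) (hi : i+1 < t+1), d ⟨i+1, hi⟩ ∣ d ⟨i, Nat.lt_of_succ_lt hi⟩)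
    (b b' : Fin (t+1) → ℕ)
    (hb : ∀ (i : ℕ) (hi : i+1 < t+1),
      b ⟨i, Nat.lt_of_succ_lt hi⟩ < d ⟨i, Nat.lt_of_succ_lt hi⟩ / d ⟨i+1, hi⟩)
    (hb' : ∀ (i : ℕ) (hi : i+1 < t+1),
      b' ⟨i, Nat.lt_of_succ_lt hi⟩ < d ⟨i, Nat.lt_of_succ_lt hi⟩ / d ⟨i+1, hi⟩)
    (hN : Nfn n t d b = Nfn n t d b') : b = b' := by
  obtain ⟨hm0, hme, he⟩ := aux_basic n t d hh hd1 hdpos hdvd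
  have hext : ∀ (c : Fin (t+1) → ℕ),
      (∀ (i : ℕ) (hi : i+1 < t+1),
        c ⟨i, Nat.lt_of_succ_lt hi⟩ < d ⟨i, Nat.lt_of_succ_lt hi⟩ / d ⟨i+1, hi⟩) →
      ∀ i < t, extfn t c i < efn t d i := by
    intro c hc i hi
    have hi1 : i + 1 < t + 1 := by omega
    have hi0 : i < t + 1 := by omega
    simp only [extfn, efn, dif_pos hi1, dif_pos hi0]
    exact hc i hi1
  have key := mixed_inj (mfn n t d) (efn t d) t hm0 hme he (extfn t b) (extfn t b')
    (hext b hb) (hext b' hb') hN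
  funext i
  have h2 := key i.val i.isLt
  simpa [extfn, i.isLt] using h2

lemma aux_Nsurj (n t : ℕ) (d : Fin (t+1) → ℕ) (hh : 0 < t+1)
    (hd1 : d ⟨0, hh⟩ = n) (hdpos : ∀ i, 0 < d i)
    (hdvd : ∀ (i : ℕ) (hi : i+1 < t+1), d ⟨i+1, hi⟩ ∣ d ⟨i, Nat.lt_of_succ_lt hi⟩)
    (k : ℕ) :
    ∃ b : Fin (t+1) → ℕ,
      (∀ (i : ℕ) (hi : i+1 < t+1),
        b ⟨i, Nat.lt_of_succ_lt hi⟩ < d ⟨i, Nat.lt_of_succ_lt hi⟩ / d ⟨i+1, hi⟩) ∧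
      Nfn n t d b = k := by
  obtain ⟨hm0, hme, he⟩ := aux_basic n t d hh hd1 hdpos hdvd
  obtain ⟨bb, hbb, hsum⟩ := mixed_surj (mfn n t d) (efn t d) t hm0 hme he k
  refine ⟨fun i => bb i.val, ?_, ?_⟩
  · intro i hi
    have h := hbb i (by omega)
    simpa only [efn, dif_pos hi] using h
  · rw [← hsum]
    unfold Nfn
    refine Finset.sum_congr rfl fun i hi => ?_
    rw [Finset.mem_range] at hi
    simp [extfn, hi]

/-- G-adic expansion.  Given `n = d₁ > d₂ > ⋯ > d_h` with
`d_{i+1} ∣ d_i` and monic polynomials `G_i` of degree `n/d_i` (so `deg G₁ = 1`),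
every `f ∈ R[Y]` is uniquely `f = ∑_{b ∈ B} c_b G₁^{b₁} ⋯ G_h^{b_h}` where
`B = {b ∈ ℕ^h : b_i < e_i = d_i/d_{i+1} for i < h}` (and `e_h = ∞`, i.e. `b_h`
unconstrained). -/
theorem stmt_6 (R : Type*) [CommRing R] [IsDomain R]
    (n h : ℕ) (hh : 0 < h) (d : Fin h → ℕ)
    (hd1 : d ⟨0, hh⟩ = n) (hdpos : ∀ i, 0 < d i) (hanti : StrictAnti d)
    (hdvd : ∀ (i : ℕ) (hi : i + 1 < h), d ⟨i + 1, hi⟩ ∣ d ⟨i, Nat.lt_of_succ_lt hi⟩)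
    (G : Fin h → Polynomial R) (hG : ∀ i, (G i).Monic)
    (hGdeg : ∀ i, (G i).natDegree = n / d i) :
    ∀ f : Polynomial R, ∃! c : (Fin h → ℕ) →₀ R,
      (∀ b ∈ c.support, ∀ (i : ℕ) (hi : i + 1 < h),
        b ⟨i, Nat.lt_of_succ_lt hi⟩ < d ⟨i, Nat.lt_of_succ_lt hi⟩ / d ⟨i + 1, hi⟩) ∧
      f = ∑ b ∈ c.support, Polynomial.C (c b) * ∏ i, G i ^ b i := by
  obtain ⟨t, rfl⟩ : ∃ t, h = t + 1 := ⟨h - 1, by omega⟩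
  intro f
  -- existence, with a bound on the degrees appearing in the support
  have exist : ∀ K (f : Polynomial R), f.natDegree < K →
      ∃ c : (Fin (t+1) → ℕ) →₀ R,
        (∀ b ∈ c.support, ∀ (i : ℕ) (hi : i + 1 < t+1),
          b ⟨i, Nat.lt_of_succ_lt hi⟩ < d ⟨i, Nat.lt_of_succ_lt hi⟩ / d ⟨i + 1, hi⟩) ∧
        f = ∑ b ∈ c.support, Polynomial.C (c b) * ∏ i, G i ^ b i ∧
        (∀ b ∈ c.support, Nfn n t d b < K) := by
    intro K
    induction K using Nat.strong_induction_on with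
    | _ K IH =>
      intro f hf
      by_cases hf0 : f = 0
      · exact ⟨0, by simp, by simp [hf0], by simp⟩
      · obtain ⟨b0, hb0B, hb0N⟩ := aux_Nsurj n t d hh hd1 hdpos hdvd f.natDegree
        have hlc0 : f.leadingCoeff ≠ 0 := Polynomial.leadingCoeff_ne_zero.mpr hf0
        have hPmonic : (∏ i, G i ^ b0 i).Monic :=
          Polynomial.monic_prod_of_monic _ _ (fun i _ => (hG i).pow _)
        have hPdeg : (∏ i, G i ^ b0 i).natDegree = f.natDegree := by
          rw [aux_deg n t d G hG hGdeg b0, hb0N]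
        have h1 : (Polynomial.C f.leadingCoeff * ∏ i, G i ^ b0 i).degree = f.degree := by
          rw [Polynomial.degree_C_mul hlc0, Polynomial.degree_eq_natDegree hPmonic.ne_zero,
            Polynomial.degree_eq_natDegree hf0, hPdeg]
        have h2 : (Polynomial.C f.leadingCoeff * ∏ i, G i ^ b0 i).leadingCoeff
            = f.leadingCoeff := by
          rw [Polynomial.leadingCoeff_mul, Polynomial.leadingCoeff_C,
            hPmonic.leadingCoeff, mul_one]
        set g := f - Polynomial.C f.leadingCoeff * ∏ i, G i ^ b0 i with hgdef
        have hglt : g.degree < f.degree := Polynomial.degree_sub_lt h1.symm hf0 h2.symm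
        have hfg : f = g + Polynomial.C f.leadingCoeff * ∏ i, G i ^ b0 i := by
          rw [hgdef]; ring
        by_cases hg0 : g = 0
        · refine ⟨Finsupp.single b0 f.leadingCoeff, ?_, ?_, ?_⟩
          · intro b hb i hi
            rw [Finsupp.support_single_ne_zero _ hlc0, Finset.mem_singleton] at hb
            subst hb
            exact hb0B i hi
          · rw [Finsupp.support_single_ne_zero _ hlc0, Finset.sum_singleton,
              Finsupp.single_eq_same]
            conv_lhs => rw [hfg, hg0]
            rw [zero_add]
          · intro b hb
            rw [Finsupp.support_single_ne_zero _ hlc0, Finset.mem_singleton] at hb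
            subst hb
            exact hb0N ▸ hf
        · have hglt' : g.natDegree < f.natDegree := Polynomial.natDegree_lt_natDegree hg0 hglt
          obtain ⟨c', hc'B, hc'sum, hc'N⟩ := IH f.natDegree hf g hglt'
          have hb0not : b0 ∉ c'.support := fun hmem => by
            have := hc'N b0 hmem; omega
          have hdisj : Disjoint c'.support ({b0} : Finset _) := by
            simp [Finset.disjoint_singleton_right, hb0not]
          have hsupp : (c' + Finsupp.single b0 f.leadingCoeff).support
              = c'.support ∪ {b0} := by
            rw [Finsupp.support_add_eq, Finsupp.support_single_ne_zero _ hlc0]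
            rwa [Finsupp.support_single_ne_zero _ hlc0]
          refine ⟨c' + Finsupp.single b0 f.leadingCoeff, ?_, ?_, ?_⟩
          · intro b hb i hi
            rw [hsupp, Finset.mem_union, Finset.mem_singleton] at hb
            rcases hb with hb | rfl
            · exact hc'B b hb i hi
            · exact hb0B i hi
          · rw [hsupp, Finset.sum_union hdisj]
            have e1 : ∑ b ∈ c'.support,
                Polynomial.C ((c' + Finsupp.single b0 f.leadingCoeff) b) * ∏ i, G i ^ b i
                = ∑ b ∈ c'.support, Polynomial.C (c' b) * ∏ i, G i ^ b i := by
              refine Finset.sum_congr rfl fun x hx => ?_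
              have hxb : x ≠ b0 := fun hEq => hb0not (hEq ▸ hx)
              rw [Finsupp.add_apply, Finsupp.single_apply,
                if_neg (fun hEq => hxb hEq.symm), add_zero]
            have e2 : ∑ b ∈ ({b0} : Finset _),
                Polynomial.C ((c' + Finsupp.single b0 f.leadingCoeff) b) * ∏ i, G i ^ b i
                = Polynomial.C f.leadingCoeff * ∏ i, G i ^ b0 i := by
              rw [Finset.sum_singleton, Finsupp.add_apply, Finsupp.single_eq_same,
                Finsupp.notMem_support_iff.mp hb0not, zero_add]
            rw [e1, e2, ← hc'sum]
            conv_lhs => rw [hfg]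
          · intro b hb
            rw [hsupp, Finset.mem_union, Finset.mem_singleton] at hb
            rcases hb with hb | rfl
            · exact lt_trans (hc'N b hb) hf
            · exact hb0N ▸ hf
  -- uniqueness
  have uniq : ∀ (c1 c2 : (Fin (t+1) → ℕ) →₀ R),
      (∀ b ∈ c1.support, ∀ (i : ℕ) (hi : i + 1 < t+1),
        b ⟨i, Nat.lt_of_succ_lt hi⟩ < d ⟨i, Nat.lt_of_succ_lt hi⟩ / d ⟨i + 1, hi⟩) →
      (∀ b ∈ c2.support, ∀ (i : ℕ) (hi : i + 1 < t+1),
        b ⟨i, Nat.lt_of_succ_lt hi⟩ < d ⟨i, Nat.lt_of_succ_lt hi⟩ / d ⟨i + 1, hi⟩) →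
      (∑ b ∈ c1.support, Polynomial.C (c1 b) * ∏ i, G i ^ b i
        = ∑ b ∈ c2.support, Polynomial.C (c2 b) * ∏ i, G i ^ b i) →
      c1 = c2 := by
    intro c1 c2 hB1 hB2 hS
    by_contra hne
    have hcd : c1 - c2 ≠ 0 := sub_ne_zero.mpr hne
    have hsub : (c1 - c2).support ⊆ c1.support ∪ c2.support := Finsupp.support_sub
    have hzero : ∑ b ∈ (c1 - c2).support,
        Polynomial.C ((c1 - c2) b) * ∏ i, G i ^ b i = 0 := by
      have e1 : ∑ b ∈ c1.support, Polynomial.C (c1 b) * ∏ i, G i ^ b i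
          = ∑ b ∈ c1.support ∪ c2.support, Polynomial.C (c1 b) * ∏ i, G i ^ b i :=
        Finset.sum_subset Finset.subset_union_left (fun x _ hx => by
          rw [Finsupp.notMem_support_iff.mp hx, map_zero, zero_mul])
      have e2 : ∑ b ∈ c2.support, Polynomial.C (c2 b) * ∏ i, G i ^ b i
          = ∑ b ∈ c1.support ∪ c2.support, Polynomial.C (c2 b) * ∏ i, G i ^ b i :=
        Finset.sum_subset Finset.subset_union_right (fun x _ hx => by
          rw [Finsupp.notMem_support_iff.mp hx, map_zero, zero_mul])
      have e3 : ∑ b ∈ (c1 - c2).support, Polynomial.C ((c1 - c2) b) * ∏ i, G i ^ b i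
          = ∑ b ∈ c1.support ∪ c2.support,
              Polynomial.C ((c1 - c2) b) * ∏ i, G i ^ b i :=
        Finset.sum_subset hsub (fun x _ hx => by
          rw [Finsupp.notMem_support_iff.mp hx, map_zero, zero_mul])
      have e4 : ∀ x ∈ c1.support ∪ c2.support,
          Polynomial.C ((c1 - c2) x) * ∏ i, G i ^ x i
          = Polynomial.C (c1 x) * ∏ i, G i ^ x i
            - Polynomial.C (c2 x) * ∏ i, G i ^ x i := by
        intro x _
        rw [Finsupp.sub_apply, map_sub, sub_mul]
      rw [e3, Finset.sum_congr rfl e4, Finset.sum_sub_distrib, ← e1, ← e2, hS, sub_self]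
    have hne' : ((c1 - c2).support).Nonempty := Finsupp.support_nonempty_iff.mpr hcd
    obtain ⟨b0, hb0mem, hmax⟩ := Finset.exists_max_image (c1 - c2).support (Nfn n t d) hne'
    have hBcd : ∀ b ∈ (c1 - c2).support, ∀ (i : ℕ) (hi : i + 1 < t+1),
        b ⟨i, Nat.lt_of_succ_lt hi⟩ < d ⟨i, Nat.lt_of_succ_lt hi⟩ / d ⟨i + 1, hi⟩ := by
      intro b hb i hi
      rcases Finset.mem_union.mp (hsub hb) with hmem | hmem
      · exact hB1 b hmem i hi
      · exact hB2 b hmem i hi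
    have hterm : ∀ x ∈ (c1 - c2).support, x ≠ b0 →
        (Polynomial.C ((c1 - c2) x) * ∏ i, G i ^ x i).coeff (Nfn n t d b0) = 0 := by
      intro x hx hxne
      rw [Polynomial.coeff_C_mul]
      have hlt : Nfn n t d x < Nfn n t d b0 :=
        lt_of_le_of_ne (hmax x hx) (fun hEq => hxne
          (aux_Ninj n t d hh hd1 hdpos hdvd x b0 (hBcd x hx) (hBcd b0 hb0mem) hEq))
      rw [Polynomial.coeff_eq_zero_of_natDegree_lt
        (by rw [aux_deg n t d G hG hGdeg]; exact hlt), mul_zero]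
    have hco : (∑ b ∈ (c1 - c2).support,
        Polynomial.C ((c1 - c2) b) * ∏ i, G i ^ b i).coeff (Nfn n t d b0)
        = (c1 - c2) b0 := by
      rw [Polynomial.finset_sum_coeff,
        Finset.sum_eq_single_of_mem b0 hb0mem hterm, Polynomial.coeff_C_mul]
      have hP : (∏ i, G i ^ b0 i).coeff (Nfn n t d b0) = 1 := by
        have hm : (∏ i, G i ^ b0 i).Monic :=
          Polynomial.monic_prod_of_monic _ _ (fun i _ => (hG i).pow _)
        rw [← aux_deg n t d G hG hGdeg b0]
        exact hm.coeff_natDegree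
      rw [hP, mul_one]
    rw [hzero, Polynomial.coeff_zero] at hco
    exact Finsupp.mem_support_iff.mp hb0mem hco.symm
  obtain ⟨c, hB, hsum, _⟩ := exist (f.natDegree + 1) f (Nat.lt_succ_self _)
  refine ⟨c, ⟨hB, hsum⟩, ?_⟩
  rintro c2 ⟨hB2, hsum2⟩
  exact uniq c2 c hB2 hB (by rw [← hsum2, ← hsum])
end

section
/- Let L ⊆ L_n be a Galois field extension, y ∈ L_n with conjugates y₁ = y, y₂, ..., y_n over L, where each conjugate is a power series with the same monomials up to nonzero scalar multiples of coefficients (i.e., yᵢ = Σ c_p k_p x^{p/n} with all k_p ≠ 0). Then the set {O(yᵢ - y_j) : yᵢ ≠ y_j} of orders of differences of distinct conjugates equals the set {O(y_k - y) : y_k ≠ y}. -/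
/-- `p` is the order (smallest exponent in the support w.r.t. the chosen order
`le`) of the coefficient family `z` representing a series `∑_p z_p x^{p/n}`. -/
def IsOrd {e : ℕ} {K : Type*} [Zero K]
    (le : (Fin e → ℤ) → (Fin e → ℤ) → Prop)
    (z : (Fin e → ℤ) → K) (p : Fin e → ℤ) : Prop :=
  z p ≠ 0 ∧ ∀ q, z q ≠ 0 → le p q

/-- if `y₁ = y, y₂, ..., y_nn` are the conjugates of `y` (every
conjugate can be mapped to `y₁` by an automorphism, which permutes the
conjugates and multiplies the coefficient of each monomial `x^{p/n}` by a
nonzero scalar `c p`), then the set of orders of differences of distinct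
conjugates equals the set of orders `O(y_k - y)`, `y_k ≠ y`. -/
theorem stmt_7 (K : Type*) [Field K] (e nn : ℕ) (hnn : 0 < nn)
    (le : (Fin e → ℤ) → (Fin e → ℤ) → Prop) (hlin : IsLinearOrder (Fin e → ℤ) le)
    (y : Fin nn → ((Fin e → ℤ) → K))
    (hconj : ∀ j : Fin nn, ∃ (σ : Equiv.Perm (Fin nn)) (c : (Fin e → ℤ) → K),
      (∀ p, c p ≠ 0) ∧ σ j = ⟨0, hnn⟩ ∧ ∀ l p, y (σ l) p = c p * y l p) :
    {p | ∃ i j, y i ≠ y j ∧ IsOrd le (y i - y j) p} =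
      {p | ∃ k, y k ≠ y ⟨0, hnn⟩ ∧ IsOrd le (y k - y ⟨0, hnn⟩) p} := by
  ext p
  simp only [Set.mem_setOf_eq]
  constructor
  · rintro ⟨i, j, hne, hz, hmin⟩
    obtain ⟨σ, c, hc, hσj, hmul⟩ := hconj j
    have key : ∀ q, (y (σ i) - y ⟨0, hnn⟩) q = c q * (y i - y j) q := by
      intro q
      simp [← hσj, hmul, mul_sub]
    refine ⟨σ i, ?_, ?_, ?_⟩
    · intro h
      have := key p
      rw [h] at this
      simp only [sub_self, Pi.zero_apply] at this
      exact hz ((mul_eq_zero.mp this.symm).resolve_left (hc p))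
    · rw [key p]; exact mul_ne_zero (hc p) hz
    · intro q hq
      rw [key q] at hq
      exact hmin q fun h => hq (by simp [Pi.sub_apply] at h ⊢; simp [h])
  · rintro ⟨k, hne, hord⟩
    exact ⟨k, ⟨0, hnn⟩, hne, hord⟩
end

section
/- Let f be a free polynomial of degree n with root y ∈ K_C[[x^{1/n}]] and characteristic exponents m₁ < ... < m_h. If m ∈ ℤ^e ∩ Supp(y), then m ∈ (nℤ)^e + m₁ℤ + ... + m_hℤ. -/
/-- The subgroup `(nℤ)^e + m₁ℤ + ⋯ + m_iℤ` of `ℤ^e`. -/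
def latticeSpan (e n : ℕ) {i : ℕ} (m : Fin i → Fin e → ℤ) : Set (Fin e → ℤ) :=
  {v | ∃ (a : Fin e → ℤ) (c : Fin i → ℤ), v = (n : ℤ) • a + ∑ j, c j • m j}

/-!
The Galois group of `L_n/L` acts on `y` through characters: `ω ∈ μ_n^e` multiplies the
coefficient of `x^{p/n}` by `ω^p`. If `p ∈ Supp y` were outside the lattice
`Λ = (nℤ)^e + m₁ℤ + ⋯ + m_hℤ`, then, since `ℤ^e/Λ` is a finite group killed by `n` and `K` has
a primitive `n`-th root of unity, some such character would be trivial on `Λ` but not at `p`.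
The corresponding automorphism `θ` moves `y` (at `p`) but fixes its coefficients at exponents
in `Λ`, so `θ(y) - y` vanishes at every `m_j` and cannot have a characteristic exponent as its
order.
-/

theorem AddChar.exists_apply_ne_one_of_nsmul_mem {A M : Type*} [AddCommGroup A] [AddGroup.FG A]
    [CommMonoid M] {n : ℕ} [NeZero n] [HasEnoughRootsOfUnity M n] {H : AddSubgroup A}
    (hH : ∀ a, n • a ∈ H) {a : A} (ha : a ∉ H) :
    ∃ ψ : AddChar A M, (∀ b ∈ H, ψ b = 1) ∧ ψ a ≠ 1 := by
  have hexp (q : A ⧸ H) : n • q = 0 := by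
    induction q using QuotientAddGroup.induction_on with
    | H b => exact (QuotientAddGroup.eq_zero_iff _).2 (hH b)
  have : Finite (A ⧸ H) := AddCommGroup.finite_of_fg_isAddTorsion _ fun q =>
    isOfFinAddOrder_iff_nsmul_eq_zero.2 ⟨n, NeZero.pos n, hexp q⟩
  have : HasEnoughRootsOfUnity M (Monoid.exponent (Multiplicative (A ⧸ H))) :=
    HasEnoughRootsOfUnity.of_dvd M (Monoid.exponent_dvd_of_forall_pow_eq_one hexp)
  obtain ⟨φ, hφ⟩ := CommGroup.exists_apply_ne_one_of_hasEnoughRootsOfUnity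
    (Multiplicative (A ⧸ H)) M (a := .ofAdd (a : A ⧸ H))
    (by rwa [ne_eq, ofAdd_eq_one, QuotientAddGroup.eq_zero_iff])
  refine ⟨(toMonoidHomEquiv.symm ((Units.coeHom M).comp φ)).compAddMonoidHom
    (QuotientAddGroup.mk' H), fun b hb => ?_, ?_⟩
  · simp [(QuotientAddGroup.eq_zero_iff b).2 hb]
  · simpa [Units.val_eq_one] using hφ

theorem AddChar.apply_eq_prod_zpow {ι M : Type*} [Fintype ι] [DecidableEq ι]
    [DivisionCommMonoid M] (ψ : AddChar (ι → ℤ) M) (q : ι → ℤ) :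
    ψ q = ∏ i, ψ (Pi.single i 1) ^ q i := by
  have hsum := map_prod ψ.toMonoidHom (fun i => .ofAdd (Pi.single i (q i))) Finset.univ
  rw [← ofAdd_sum, Finset.univ_sum_single] at hsum
  simp only [toMonoidHom_apply, toAdd_ofAdd] at hsum
  rw [hsum]
  refine Finset.prod_congr rfl fun i _ => ?_
  rw [← ψ.map_zsmul_eq_zpow, ← Pi.single_smul, smul_eq_mul, mul_one]

section LatticeAddSubgroup

variable {e : ℕ} (n : ℕ) {i : ℕ} (m : Fin i → Fin e → ℤ)

def latticeAddSubgroup : AddSubgroup (Fin e → ℤ) where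
  carrier := latticeSpan e n m
  zero_mem' := ⟨0, 0, by simp⟩
  add_mem' := by
    rintro v w ⟨a, c, rfl⟩ ⟨a', c', rfl⟩
    refine ⟨a + a', c + c', ?_⟩
    simp only [Pi.add_apply, smul_add, add_smul, Finset.sum_add_distrib]
    abel
  neg_mem' := by
    rintro v ⟨a, c, rfl⟩
    refine ⟨-a, -c, ?_⟩
    simp only [Pi.neg_apply, smul_neg, neg_smul, neg_add, ← Finset.sum_neg_distrib]

theorem mem_latticeAddSubgroup {v : Fin e → ℤ} :
    v ∈ latticeAddSubgroup n m ↔ v ∈ latticeSpan e n m :=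
  Iff.rfl

theorem nsmul_mem_latticeAddSubgroup (v : Fin e → ℤ) : n • v ∈ latticeAddSubgroup n m :=
  ⟨v, 0, by simp⟩

theorem apply_mem_latticeAddSubgroup (j : Fin i) : m j ∈ latticeAddSubgroup n m :=
  ⟨0, Pi.single j 1, by simp [Pi.single_apply, ite_smul]⟩

end LatticeAddSubgroup

theorem stmt_9_general (K : Type*) [Field K] (e n h : ℕ) (hn : 0 < n)
    (ζ : K) (hζ : IsPrimitiveRoot ζ n)
    (le : (Fin e → ℤ) → (Fin e → ℤ) → Prop)
    (y : (Fin e → ℤ) → K) (m : Fin h → Fin e → ℤ)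
    (hchar : ∀ ω : Fin e → K, (∀ i, ω i ^ n = 1) →
      (fun p => (∏ i, ω i ^ (p i)) * y p) ≠ y →
      ∃ j, IsOrd le (fun p => (∏ i, ω i ^ (p i)) * y p - y p) (m j)) :
    ∀ p, y p ≠ 0 → p ∈ latticeSpan e n m := by
  intro p hp
  by_contra hpΛ
  have : NeZero n := ⟨hn.ne'⟩
  have : HasEnoughRootsOfUnity K n := ⟨⟨ζ, hζ⟩, inferInstance⟩
  obtain ⟨ψ, hψΛ, hψp⟩ := AddChar.exists_apply_ne_one_of_nsmul_mem (M := K)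
    (nsmul_mem_latticeAddSubgroup n m) ((mem_latticeAddSubgroup n m).not.2 hpΛ)
  set ω : Fin e → K := fun i => ψ (Pi.single i 1)
  have hω (q : Fin e → ℤ) : ∏ i, ω i ^ q i = ψ q := (ψ.apply_eq_prod_zpow q).symm
  have hωn (i : Fin e) : ω i ^ n = 1 := by
    rw [← ψ.map_nsmul_eq_pow, hψΛ _ (nsmul_mem_latticeAddSubgroup n m _)]
  have hmoves : (fun q => (∏ i, ω i ^ q i) * y q) ≠ y := fun hfix =>
    hψp (by simpa [hω, hp] using congrFun hfix p)
  obtain ⟨j, hj, -⟩ := hchar ω hωn hmoves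
  apply hj
  dsimp only
  rw [hω, hψΛ _ (apply_mem_latticeAddSubgroup n m j), one_mul, sub_self]

/-- if `y = ∑ c_p x^{p/n}` is a root of a free polynomial of
degree `n` with characteristic exponents `m₁ < ⋯ < m_h`, then every
`m ∈ ℤ^e ∩ Supp y` lies in `(nℤ)^e + m₁ℤ + ⋯ + m_hℤ`.  The automorphisms of
`L_n/L` act on `y` by multiplying the coefficient of `x^{p/n}` by `ω^p`, for
`ω ∈ μ_n^e`, and by definition of the characteristic exponents the order of
`θ(y) - y` (whenever nonzero) is one of the `m_j`. -/
theorem stmt_9 (K : Type*) [Field K] (e n h : ℕ) (hn : 0 < n)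
    (ζ : K) (hζ : IsPrimitiveRoot ζ n)
    (le : (Fin e → ℤ) → (Fin e → ℤ) → Prop) (hlin : IsLinearOrder (Fin e → ℤ) le)
    (y : (Fin e → ℤ) → K) (m : Fin h → Fin e → ℤ)
    (hchar : ∀ ω : Fin e → K, (∀ i, ω i ^ n = 1) →
      (fun p => (∏ i, ω i ^ (p i)) * y p) ≠ y →
      ∃ j, IsOrd le (fun p => (∏ i, ω i ^ (p i)) * y p - y p) (m j)) :
    ∀ p, y p ≠ 0 → p ∈ latticeSpan e n m :=
  stmt_9_general K e n h hn ζ hζ le y m hchar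
end

section
/- Let n ∈ ℕ, m₁ < ... < m_h ∈ ℤ^e, and define D₁ = n^e and D_{i+1} = gcd of the (e,e)-minors of the matrix (nI_e, m₁^T, ..., mᵢ^T). Let v ∈ ℤ^e be nonzero and D̃ = gcd of the (e,e)-minors of (nI_e, m₁^T, ..., mᵢ^T, v^T). Then v ∈ (nℤ)^e + Σ_{j=1}^{i} m_jℤ if and only if D_{i+1} = D̃. Moreover (D_{i+1}/D̃)·v ∈ (nℤ)^e + Σ_{j=1}^{i} m_jℤ, and if D_{i+1} > D̃ then kv ∉ (nℤ)^e + Σ_{j=1}^{i} m_jℤ for all 1 ≤ k < D_{i+1}/D̃. -/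
/-- The gcd of the `(e,e)` minors of the `e × (e+i)` matrix
`(nI_e, m₁ᵀ, ..., m_iᵀ)`. -/
def minorGcd (e n : ℕ) {i : ℕ} (m : Fin i → Fin e → ℤ) : ℤ :=
  Finset.univ.gcd fun c : Fin e → (Fin e ⊕ Fin i) =>
    (Matrix.of fun r s =>
      Sum.elim (fun l => if r = l then (n : ℤ) else 0) (fun l => m l r) (c s)).det

open Submodule

section MaxMinorGcd

variable {e : ℕ}

theorem det_dvd_det_of_mem_span (b w : Fin e → Fin e → ℤ)
    (hw : ∀ r, w r ∈ span ℤ (Set.range b)) : (Matrix.of b).det ∣ (Matrix.of w).det := by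
  choose c hc using fun r => (mem_span_range_iff_exists_fun ℤ).mp (hw r)
  have hmul : Matrix.of w = Matrix.of c * Matrix.of b := by
    ext r s
    simp [← hc, Matrix.mul_apply, Finset.sum_apply]
  rw [hmul, Matrix.det_mul]
  exact dvd_mul_left _ _

variable {κ : Type*} [Fintype κ]

def maxMinorGcd (f : κ → Fin e → ℤ) : ℤ :=
  Finset.univ.gcd fun p : Fin e → κ => (Matrix.of fun r s => f (p r) s).det

theorem maxMinorGcd_nonneg (f : κ → Fin e → ℤ) : 0 ≤ maxMinorGcd f := by
  rw [maxMinorGcd, ← Finset.normalize_gcd, ← Int.abs_eq_normalize]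
  exact abs_nonneg _

theorem maxMinorGcd_dvd_det_of_mem_span (f : κ → Fin e → ℤ) (w : Fin e → Fin e → ℤ)
    (hw : ∀ r, w r ∈ span ℤ (Set.range f)) : maxMinorGcd f ∣ (Matrix.of w).det := by
  choose c hc using fun r => (mem_span_range_iff_exists_fun ℤ).mp (hw r)
  have hdet : (Matrix.of w).det = ∑ p : Fin e → κ,
      Matrix.detRowAlternating.toMultilinearMap fun r => c r (p r) • f (p r) := by
    rw [← funext hc]
    exact MultilinearMap.map_sum _ _
  rw [hdet]
  refine Finset.dvd_sum fun p _ => ?_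
  rw [MultilinearMap.map_smul_univ]
  exact (Finset.gcd_dvd (Finset.mem_univ p)).mul_left _

theorem natAbs_maxMinorGcd_eq_index (f : κ → Fin e → ℤ)
    (hf : (span ℤ (Set.range f)).toAddSubgroup.index ≠ 0) :
    (maxMinorGcd f).natAbs = (span ℤ (Set.range f)).toAddSubgroup.index := by
  set N := span ℤ (Set.range f)
  obtain ⟨φ⟩ := Int.submodule_toAddSubgroup_index_ne_zero_iff.mp hf
  set bN := (Pi.basisFun ℤ (Fin e)).map φ.symm
  set b : Fin e → Fin e → ℤ := fun r => bN r
  have hb : (Matrix.of b).det.natAbs = N.toAddSubgroup.index := by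
    rw [← Pi.basisFun_det_apply]
    exact natAbs_det_basis_change _ N bN
  have hspan : ∀ x ∈ N, x ∈ span ℤ (Set.range b) := fun x hx =>
    (mem_span_range_iff_exists_fun ℤ).mpr
      ⟨bN.repr ⟨x, hx⟩, by
        simpa only [coe_sum, coe_smul] using congrArg Subtype.val (bN.sum_repr ⟨x, hx⟩)⟩
  rw [← hb]
  refine Nat.dvd_antisymm (Int.natAbs_dvd_natAbs.mpr ?_) (Int.natAbs_dvd_natAbs.mpr ?_)
  · exact maxMinorGcd_dvd_det_of_mem_span f b fun r => (bN r).2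
  · exact Finset.dvd_gcd fun p _ =>
      det_dvd_det_of_mem_span b _ fun r => hspan _ (subset_span ⟨p r, rfl⟩)

end MaxMinorGcd

theorem AddSubgroup.index_eq_addOrderOf_mul_index_sup_zmultiples {G : Type*} [AddCommGroup G]
    (H : AddSubgroup G) (g : G) :
    H.index = addOrderOf (g : G ⧸ H) * (H ⊔ AddSubgroup.zmultiples g).index := by
  have hrel : H.relIndex (AddSubgroup.zmultiples g) = addOrderOf (g : G ⧸ H) := by
    conv_lhs => rw [← QuotientAddGroup.ker_mk' H]
    rw [AddSubgroup.relIndex_ker, AddMonoidHom.map_zmultiples, Nat.card_zmultiples]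
    rfl
  rw [← H.relIndex_mul_index le_sup_left, AddSubgroup.relIndex_sup_left, hrel]

section Lattice

variable (e n : ℕ) {i : ℕ}

def latticeGens (m : Fin i → Fin e → ℤ) : Fin e ⊕ Fin i → Fin e → ℤ :=
  Sum.elim (fun l => Pi.single l (n : ℤ)) m

def latticeSubgroup (m : Fin i → Fin e → ℤ) : AddSubgroup (Fin e → ℤ) :=
  (span ℤ (Set.range (latticeGens e n m))).toAddSubgroup

theorem minorGcd_eq_maxMinorGcd (m : Fin i → Fin e → ℤ) :
    minorGcd e n m = maxMinorGcd (latticeGens e n m) := by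
  refine Finset.gcd_congr rfl fun c _ => ?_
  rw [← Matrix.det_transpose]
  congr 1
  ext r s
  simp only [Matrix.transpose_apply, Matrix.of_apply]
  rcases c r with l | l <;> simp [latticeGens, Pi.single_apply]

theorem coe_latticeSubgroup (m : Fin i → Fin e → ℤ) :
    (latticeSubgroup e n m : Set (Fin e → ℤ)) = latticeSpan e n m := by
  have hsingle : ∀ a : Fin e → ℤ, ∑ l, a l • Pi.single l (n : ℤ) = (n : ℤ) • a := fun a => by
    ext s
    simp [Finset.sum_apply, Pi.single_apply, mul_comm]
  ext v
  rw [latticeSubgroup, coe_toAddSubgroup, SetLike.mem_coe, mem_span_range_iff_exists_fun]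
  simp only [Fintype.sum_sum_type, latticeGens, Sum.elim_inl, Sum.elim_inr, hsingle]
  constructor
  · rintro ⟨c, rfl⟩
    exact ⟨fun l => c (Sum.inl l), fun j => c (Sum.inr j), rfl⟩
  · rintro ⟨a, c, rfl⟩
    exact ⟨Sum.elim a c, rfl⟩

theorem latticeSubgroup_snoc (m : Fin i → Fin e → ℤ) (v : Fin e → ℤ) :
    latticeSubgroup e n (Fin.snoc m v) = latticeSubgroup e n m ⊔ AddSubgroup.zmultiples v := by
  rw [latticeSubgroup, latticeSubgroup, latticeGens, latticeGens, Set.Sum.elim_range,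
    Set.Sum.elim_range, Fin.range_snoc, Set.union_insert, span_insert, sup_comm,
    sup_toAddSubgroup, span_singleton_toAddSubgroup_eq_zmultiples]

variable {e n}

theorem index_latticeSubgroup_ne_zero (hn : n ≠ 0) (m : Fin i → Fin e → ℤ) :
    (latticeSubgroup e n m).index ≠ 0 := by
  have hle : (nsmulAddMonoidHom (α := Fin e → ℤ) n).range ≤ latticeSubgroup e n m := by
    rintro _ ⟨y, rfl⟩
    rw [← SetLike.mem_coe, coe_latticeSubgroup]
    exact ⟨y, 0, by simp⟩
  have hdvd := AddSubgroup.index_dvd_of_le hle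
  rw [AddSubgroup.index_range_nsmul, Module.finrank_fin_fun] at hdvd
  exact ne_zero_of_dvd_ne_zero (pow_ne_zero _ hn) hdvd

theorem minorGcd_eq_index (hn : n ≠ 0) (m : Fin i → Fin e → ℤ) :
    minorGcd e n m = (latticeSubgroup e n m).index := by
  rw [minorGcd_eq_maxMinorGcd, ← Int.natAbs_of_nonneg (maxMinorGcd_nonneg _),
    natAbs_maxMinorGcd_eq_index _ (index_latticeSubgroup_ne_zero hn m)]
  rfl

end Lattice

theorem stmt_10_general (e n : ℕ) (hn : 0 < n) (i : ℕ)
    (m : Fin i → Fin e → ℤ) (v : Fin e → ℤ) :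
    (v ∈ latticeSpan e n m ↔ minorGcd e n m = minorGcd e n (Fin.snoc m v)) ∧
    (minorGcd e n m / minorGcd e n (Fin.snoc m v)) • v ∈ latticeSpan e n m ∧
    (minorGcd e n (Fin.snoc m v) < minorGcd e n m →
      ∀ k : ℤ, 1 ≤ k → k < minorGcd e n m / minorGcd e n (Fin.snoc m v) →
        k • v ∉ latticeSpan e n m) := by
  set t := addOrderOf (v : (Fin e → ℤ) ⧸ latticeSubgroup e n m)
  have hpos : 0 < minorGcd e n (Fin.snoc m v) := by
    rw [minorGcd_eq_index hn.ne']
    exact Int.natCast_pos.mpr (Nat.pos_of_ne_zero (index_latticeSubgroup_ne_zero hn.ne' _))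
  have hD : minorGcd e n m = t * minorGcd e n (Fin.snoc m v) := by
    rw [minorGcd_eq_index hn.ne', minorGcd_eq_index hn.ne', latticeSubgroup_snoc,
      AddSubgroup.index_eq_addOrderOf_mul_index_sup_zmultiples, Nat.cast_mul]
  have hquot : minorGcd e n m / minorGcd e n (Fin.snoc m v) = t := by
    rw [hD, Int.mul_ediv_cancel _ hpos.ne']
  have hmem : ∀ k : ℤ, k • v ∈ latticeSpan e n m ↔ (t : ℤ) ∣ k := fun k => by
    rw [← coe_latticeSubgroup, SetLike.mem_coe, ← QuotientAddGroup.eq_zero_iff,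
      QuotientAddGroup.mk_zsmul, addOrderOf_dvd_iff_zsmul_eq_zero]
  refine ⟨?_, ?_, ?_⟩
  · have h1 := hmem 1
    rw [one_smul] at h1
    rw [h1, hD, mul_eq_right₀ hpos.ne', Int.natCast_dvd_ofNat, Nat.dvd_one, Nat.cast_eq_one]
  · rw [hquot, hmem]
  · intro _ k hk hlt hkv
    rw [hquot] at hlt
    exact hlt.not_ge (Int.le_of_dvd (by omega) ((hmem k).mp hkv))

/-- with `D_{i+1}` the gcd of the minors of `(nI_e, m₁ᵀ,...,m_iᵀ)`
and `D̃` the gcd of the minors of `(nI_e, m₁ᵀ,...,m_iᵀ, vᵀ)` for a nonzero `v`: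
`v ∈ (nℤ)^e + ∑ m_jℤ ↔ D_{i+1} = D̃`; moreover `(D_{i+1}/D̃)·v` belongs to this
subgroup, and if `D_{i+1} > D̃` then `k·v` does not, for `1 ≤ k < D_{i+1}/D̃`. -/
theorem stmt_10 (e n : ℕ) (hn : 0 < n) (i : ℕ)
    (m : Fin i → Fin e → ℤ) (v : Fin e → ℤ) (hv : v ≠ 0) :
    (v ∈ latticeSpan e n m ↔ minorGcd e n m = minorGcd e n (Fin.snoc m v)) ∧
    (minorGcd e n m / minorGcd e n (Fin.snoc m v)) • v ∈ latticeSpan e n m ∧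
    (minorGcd e n (Fin.snoc m v) < minorGcd e n m →
      ∀ k : ℤ, 1 ≤ k → k < minorGcd e n m / minorGcd e n (Fin.snoc m v) →
        k • v ∉ latticeSpan e n m) :=
  stmt_10_general e n hn i m v
end

section
/- Let f be a free polynomial of degree n with characteristic exponents m₁ < ... < m_h, GCD-sequence D₁ = n^e, D_{i+1} = gcd of (e,e)-minors of (nI_e, m₁^T,...,mᵢ^T), e_i = D_i/D_{i+1}, and r-sequence r₁ = m₁, r_i = e_{i-1}r_{i-1} + m_i - m_{i-1}. Then for each i ∈ {1,...,h}: e_i·r_i ∈ (nℤ)^e + Σ_{j<i} r_jℤ, and α·r_i ∉ (nℤ)^e + Σ_{j<i} r_jℤ for all integers 1 ≤ α < e_i. -/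
/-- `e_i = D_i / D_{i+1}` (`i` is 0-indexed here: `Eseq` at `i` uses the first
`i` resp. `i+1` of the exponents `m`). -/
def Eseq (e n h : ℕ) (m : Fin h → Fin e → ℤ) (i : Fin h) : ℤ :=
  minorGcd e n (fun j : Fin i.val => m ⟨j.val, j.2.trans i.2⟩) /
    minorGcd e n (fun j : Fin (i.val + 1) => m ⟨j.val, Nat.lt_of_lt_of_le j.2 i.2⟩)


open Matrix Submodule Set

section DetIdeal

variable {R ι : Type*} [CommRing R] [Fintype ι] [DecidableEq ι]

def detIdeal (L : Submodule R (ι → R)) : Ideal R :=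
  Ideal.span {x | ∃ M : Matrix ι ι R, (∀ s, M s ∈ L) ∧ M.det = x}

theorem det_mem_detIdeal {L : Submodule R (ι → R)} {M : Matrix ι ι R} (hM : ∀ s, M s ∈ L) :
    M.det ∈ detIdeal L :=
  Ideal.subset_span ⟨M, hM, rfl⟩

theorem detIdeal_mono {L L' : Submodule R (ι → R)} (h : L ≤ L') : detIdeal L ≤ detIdeal L' :=
  Ideal.span_mono fun _ ⟨M, hM, hx⟩ => ⟨M, fun s => h (hM s), hx⟩

theorem det_mem_of_forall_mem_span {S : Set (ι → R)} {J : Ideal R}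
    (hS : ∀ M : Matrix ι ι R, (∀ s, M s ∈ S) → M.det ∈ J)
    {M : Matrix ι ι R} (hM : ∀ s, M s ∈ span R S) : M.det ∈ J := by
  suffices ∀ T : Finset ι, ∀ M : Matrix ι ι R,
      (∀ s ∈ T, M s ∈ span R S) → (∀ s ∉ T, M s ∈ S) → M.det ∈ J from
    this Finset.univ M (fun s _ => hM s) (fun s hs => absurd (Finset.mem_univ s) hs)
  intro T
  induction T using Finset.induction_on with
  | empty => exact fun M _ hM => hS M fun s => hM s (Finset.notMem_empty s)
  | insert a T ha ih =>
    intro M hspan hrest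
    have hrow : ∀ u ∈ span R S, (M.updateRow a u).det ∈ J := fun u hu => by
      induction hu using Submodule.span_induction with
      | mem u hu =>
        refine ih (M.updateRow a u) (fun s hs => ?_) (fun s hs => ?_)
        · rw [updateRow_ne (ne_of_mem_of_not_mem hs ha)]
          exact hspan s (Finset.mem_insert_of_mem hs)
        · by_cases hsa : s = a
          · rw [hsa, updateRow_self]; exact hu
          · rw [updateRow_ne hsa]; exact hrest s (by simp [hsa, hs])
      | zero => rw [det_eq_zero_of_row_eq_zero a fun j => by simp]; exact J.zero_mem
      | add u w _ _ hu hw => rw [det_updateRow_add]; exact J.add_mem hu hw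
      | smul c u _ hu => rw [det_updateRow_smul]; exact J.mul_mem_left c hu
    simpa only [updateRow_eq_self] using hrow (M a) (hspan a (Finset.mem_insert_self a T))

theorem detIdeal_span (S : Set (ι → R)) :
    detIdeal (span R S) = Ideal.span {x | ∃ M : Matrix ι ι R, (∀ s, M s ∈ S) ∧ M.det = x} :=
  le_antisymm
    (Ideal.span_le.mpr <| by
      rintro _ ⟨M, hM, rfl⟩
      exact det_mem_of_forall_mem_span (fun M hM => Ideal.subset_span (by exact ⟨M, hM, rfl⟩)) hM)
    (Ideal.span_mono <| by
      rintro _ ⟨M, hM, rfl⟩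
      exact ⟨M, fun s => subset_span (hM s), rfl⟩)

theorem mul_mem_detIdeal_of_smul_mem {L : Submodule R (ι → R)} {v : ι → R} {α : R}
    (hv : α • v ∈ L) {x : R} (hx : x ∈ detIdeal (L ⊔ span R {v})) : α * x ∈ detIdeal L := by
  rw [mul_comm, ← smul_eq_mul, ← mem_colon_singleton]
  revert x
  rw [← SetLike.le_def, ← span_eq L, ← span_union, detIdeal_span, span_eq, Ideal.span_le]
  rintro _ ⟨M, hM, rfl⟩
  rw [SetLike.mem_coe, mem_colon_singleton, smul_eq_mul, mul_comm]
  by_cases hL : ∀ s, M s ∈ L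
  · exact Ideal.mul_mem_left _ _ (det_mem_detIdeal hL)
  -- a row outside `L` is `v`; two of them kill the determinant, a single one is scaled to `α • v`
  push Not at hL
  obtain ⟨s₀, hs₀⟩ := hL
  have hv_row : ∀ s, M s ∉ L → M s = v := fun s hs => (hM s).resolve_left hs
  by_cases hdup : ∃ s₁, s₁ ≠ s₀ ∧ M s₁ ∉ L
  · obtain ⟨s₁, hne, hs₁⟩ := hdup
    rw [det_zero_of_row_eq hne ((hv_row s₁ hs₁).trans (hv_row s₀ hs₀).symm), mul_zero]
    exact zero_mem _
  push Not at hdup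
  rw [← M.updateRow_eq_self s₀, ← det_updateRow_smul, hv_row s₀ hs₀]
  refine det_mem_detIdeal fun s => ?_
  by_cases hs : s = s₀
  · rw [hs, updateRow_self]; exact hv
  · rw [updateRow_ne hs]; exact hdup s hs

theorem exists_mul_eq_and_smul_mem [IsDomain R] {L : Submodule R (ι → R)} {v : ι → R} {g' : R}
    (hg' : detIdeal (L ⊔ span R {v}) ≤ Ideal.span {g'}) (hg'0 : g' ≠ 0) {x : R}
    (hx : x ∈ detIdeal L) : ∃ t, t • v ∈ L ∧ g' * t = x := by
  suffices detIdeal L ≤ (L.comap (LinearMap.toSpanSingleton R _ v)).map (LinearMap.mulLeft R g') by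
    simpa using this hx
  refine Ideal.span_le.mpr ?_
  rintro _ ⟨M, hM, rfl⟩
  have hdvd : ∀ N : Matrix ι ι R, (∀ s, N s ∈ L ⊔ span R {v}) → g' ∣ N.det := fun N hN =>
    Ideal.mem_span_singleton.mp (hg' (det_mem_detIdeal hN))
  obtain ⟨t, ht⟩ := hdvd M fun s => mem_sup_left (hM s)
  choose q hq using fun j => hdvd (M.updateRow j v) fun s => by
    by_cases hs : s = j
    · rw [hs, updateRow_self]; exact mem_sup_right (mem_span_singleton_self v)
    · rw [updateRow_ne hs]; exact mem_sup_left (hM s)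
  -- Cramer's rule for `Mᵀ`, whose columns are the rows of `M`
  have hcramer : M.det • v = ∑ j, (M.updateRow j v).det • M j := by
    rw [← det_transpose, ← mulVec_cramer, mulVec_transpose, vecMul_eq_sum]
    simp only [cramer_transpose_apply]
  have htv : t • v = ∑ j, q j • M j := smul_right_injective _ hg'0 <| by
    simp only [smul_smul, ← ht, hcramer, Finset.smul_sum, hq]
  refine ⟨t, ?_, ht.symm⟩
  simp only [SetLike.mem_coe, mem_comap, LinearMap.toSpanSingleton_apply, htv]
  exact sum_mem fun j _ => L.smul_mem _ (hM j)

theorem smul_mem_iff_dvd_mul [IsDomain R] {L : Submodule R (ι → R)} {v : ι → R} {g g' : R}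
    (hg : detIdeal L = Ideal.span {g}) (hg' : detIdeal (L ⊔ span R {v}) = Ideal.span {g'})
    (hg'0 : g' ≠ 0) (α : R) : α • v ∈ L ↔ g ∣ g' * α := by
  constructor
  · intro hv
    rw [← Ideal.mem_span_singleton, ← hg, mul_comm]
    exact mul_mem_detIdeal_of_smul_mem hv (hg' ▸ Ideal.mem_span_singleton_self g')
  · rintro ⟨k, hk⟩
    obtain ⟨t, ht, rfl⟩ :=
      exists_mul_eq_and_smul_mem hg'.le hg'0 (hg ▸ Ideal.mem_span_singleton_self g)
    rw [mul_assoc] at hk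
    rw [mul_left_cancel₀ hg'0 hk, mul_comm, mul_smul]
    exact L.smul_mem k ht

end DetIdeal

theorem Ideal.span_range_eq_span_gcd {R α : Type*} [CommRing R] [IsBezout R]
    [NormalizedGCDMonoid R] [Fintype α] (f : α → R) :
    Ideal.span (range f) = Ideal.span {Finset.univ.gcd f} := by
  refine le_antisymm (Ideal.span_le.mpr ?_) ((Ideal.span_singleton_le_iff_mem _).mpr ?_)
  · rintro _ ⟨a, rfl⟩
    exact Ideal.mem_span_singleton.mpr (Finset.gcd_dvd (Finset.mem_univ a))
  · obtain ⟨g, hg⟩ := Finset.univ.gcd_eq_sum_mul f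
    rw [hg]
    exact Ideal.sum_mem _ fun a _ => Ideal.mul_mem_right _ _ (Ideal.subset_span (mem_range_self a))

theorem range_prefix_eq_image {α : Type*} {h k : ℕ} (f : Fin h → α) (hk : k ≤ h) :
    range (fun j : Fin k => f ⟨j, j.2.trans_le hk⟩) = f '' {j | j.val < k} := by
  ext x
  constructor
  · rintro ⟨j, rfl⟩
    exact ⟨_, j.2, rfl⟩
  · rintro ⟨j, hj, rfl⟩
    exact ⟨⟨j, hj⟩, rfl⟩

theorem sup_span_singleton_eq_of_sub_mem {R M : Type*} [Ring R] [AddCommGroup M] [Module R M]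
    {L : Submodule R M} {u w : M} (h : u - w ∈ L) : L ⊔ span R {u} = L ⊔ span R {w} := by
  have key : ∀ u w : M, u - w ∈ L → L ⊔ span R {u} ≤ L ⊔ span R {w} := fun u w h =>
    sup_le le_sup_left <| (span_singleton_le_iff_mem _ _).mpr <| by
      simpa using add_mem (mem_sup_left h) (mem_sup_right (mem_span_singleton_self w))
  exact le_antisymm (key u w h) (key w u (by simpa using neg_mem h))

section CharacteristicSequences

variable {e : ℕ} (n : ℕ)

/-- `(nℤ)^e + f₀ℤ + ⋯ + f_{k-1}ℤ`, with the `0`-indexed family `f`. -/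
def prefixLattice {h : ℕ} (f : Fin h → Fin e → ℤ) (k : ℕ) : Submodule ℤ (Fin e → ℤ) :=
  span ℤ (range (fun l => Pi.single l (n : ℤ)) ∪ f '' {j | j.val < k})

theorem sum_smul_single_eq_smul (a : Fin e → ℤ) :
    ∑ l, a l • Pi.single l (n : ℤ) = (n : ℤ) • a := by
  ext r
  simp [Finset.sum_apply, Pi.single_apply, mul_comm]

theorem latticeSpan_eq_span {i : ℕ} (m : Fin i → Fin e → ℤ) :
    latticeSpan e n m = span ℤ (range (fun l => Pi.single l (n : ℤ)) ∪ range m) := by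
  ext v
  rw [SetLike.mem_coe, span_union, mem_sup]
  simp only [mem_span_range_iff_exists_fun]
  constructor
  · rintro ⟨a, c, rfl⟩
    exact ⟨_, ⟨a, rfl⟩, _, ⟨c, rfl⟩, by rw [sum_smul_single_eq_smul]⟩
  · rintro ⟨_, ⟨a, rfl⟩, _, ⟨c, rfl⟩, rfl⟩
    exact ⟨a, c, by rw [sum_smul_single_eq_smul]⟩

theorem detIdeal_latticeSpan {i : ℕ} (m : Fin i → Fin e → ℤ) :
    detIdeal (span ℤ (latticeSpan e n m)) = Ideal.span {minorGcd e n m} := by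
  set gen := Sum.elim (fun l => Pi.single l (n : ℤ)) m
  have hminor : ∀ c : Fin e → Fin e ⊕ Fin i,
      (of fun r s => Sum.elim (fun l => if r = l then (n : ℤ) else 0) (fun l => m l r) (c s)).det
        = (of fun s => gen (c s)).det := by
    intro c
    rw [← det_transpose]
    congr
    ext r s
    simp only [of_apply]
    cases c s <;> simp [Pi.single_apply]
  rw [latticeSpan_eq_span, span_coe_eq_restrictScalars, restrictScalars_self, detIdeal_span,
    minorGcd, ← Ideal.span_range_eq_span_gcd]
  congr 1
  ext x
  constructor
  · rintro ⟨M, hM, rfl⟩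
    rw [← Sum.elim_range] at hM
    choose c hc using hM
    exact ⟨c, (hminor c).trans (congrArg det (funext hc))⟩
  · rintro ⟨c, rfl⟩
    refine ⟨of fun s => gen (c s), fun s => ?_, (hminor c).symm⟩
    rw [← Sum.elim_range]; exact ⟨c s, rfl⟩

theorem minorGcd_ne_zero (hn : n ≠ 0) {i : ℕ} (m : Fin i → Fin e → ℤ) : minorGcd e n m ≠ 0 := by
  rw [minorGcd, Ne, Finset.gcd_eq_zero_iff, not_forall]
  refine ⟨Sum.inl, fun h => ?_⟩
  have hdiag : (of fun r s => Sum.elim (fun l => if r = l then (n : ℤ) else 0) (fun l => m l r)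
      ((Sum.inl : Fin e → Fin e ⊕ Fin i) s)) = Matrix.diagonal fun _ => (n : ℤ) := by
    ext r s; simp [Matrix.diagonal_apply]
  rw [hdiag, det_diagonal, Finset.prod_const] at h
  exact pow_ne_zero _ (Int.natCast_ne_zero.mpr hn) (h (Finset.mem_univ _))

variable {h : ℕ}

theorem latticeSpan_eq_prefixLattice (f : Fin h → Fin e → ℤ) {k : ℕ} (hk : k ≤ h) :
    latticeSpan e n (fun j : Fin k => f ⟨j, j.2.trans_le hk⟩) = prefixLattice n f k := by
  rw [latticeSpan_eq_span, range_prefix_eq_image f hk, prefixLattice]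

theorem detIdeal_prefixLattice (f : Fin h → Fin e → ℤ) {k : ℕ} (hk : k ≤ h) :
    detIdeal (prefixLattice n f k) =
      Ideal.span {minorGcd e n (fun j : Fin k => f ⟨j, j.2.trans_le hk⟩)} := by
  rw [← detIdeal_latticeSpan, latticeSpan_eq_prefixLattice n f hk, span_eq]

theorem prefixLattice_zero (f : Fin h → Fin e → ℤ) :
    prefixLattice n f 0 = span ℤ (range fun l => Pi.single l (n : ℤ)) := by
  simp [prefixLattice]

theorem prefixLattice_succ (f : Fin h → Fin e → ℤ) {k : ℕ} (hk : k < h) :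
    prefixLattice n f (k + 1) = prefixLattice n f k ⊔ span ℤ {f ⟨k, hk⟩} := by
  have : {j : Fin h | j.val < k + 1} = {j | j.val < k} ∪ {⟨k, hk⟩} := by
    ext j
    simp only [mem_ofPred_eq, mem_union, mem_singleton_iff, Fin.ext_iff]
    omega
  rw [prefixLattice, prefixLattice, this, image_union, image_singleton, ← union_assoc, span_union]

theorem smul_mem_prefixLattice_iff (hn : n ≠ 0) (m : Fin h → Fin e → ℤ) {k : ℕ} (hk : k < h)
    {v : Fin e → ℤ} (hv : v - m ⟨k, hk⟩ ∈ prefixLattice n m k) (α : ℤ) :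
    α • v ∈ prefixLattice n m k ↔ Eseq e n h m ⟨k, hk⟩ ∣ α := by
  have hD := detIdeal_prefixLattice n m hk.le
  have hD' : detIdeal (prefixLattice n m k ⊔ span ℤ {v}) =
      Ideal.span {minorGcd e n (fun j : Fin (k + 1) => m ⟨j, j.2.trans_le hk⟩)} := by
    rw [sup_span_singleton_eq_of_sub_mem hv, ← prefixLattice_succ, detIdeal_prefixLattice n m hk]
  have hD'0 := minorGcd_ne_zero n hn (fun j : Fin (k + 1) => m ⟨j, j.2.trans_le hk⟩)
  obtain ⟨E, hE⟩ : minorGcd e n (fun j : Fin (k + 1) => m ⟨j, j.2.trans_le hk⟩) ∣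
      minorGcd e n (fun j : Fin k => m ⟨j, j.2.trans_le hk.le⟩) := by
    rw [← Ideal.mem_span_singleton, ← hD']
    exact detIdeal_mono le_sup_left (hD ▸ Ideal.mem_span_singleton_self _)
  rw [smul_mem_iff_dvd_mul hD hD' hD'0, Eseq]
  change _ ↔ minorGcd e n (fun j : Fin k => m ⟨j, j.2.trans_le hk.le⟩) /
    minorGcd e n (fun j : Fin (k + 1) => m ⟨j, j.2.trans_le hk⟩) ∣ α
  rw [hE, Int.mul_ediv_cancel_left _ hD'0, mul_dvd_mul_iff_left hD'0]

theorem rSeq_sub_mem_and_prefixLattice_eq (hn : n ≠ 0) (m r : Fin h → Fin e → ℤ)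
    (hr0 : ∀ hh : 0 < h, r ⟨0, hh⟩ = m ⟨0, hh⟩)
    (hrrec : ∀ (i : ℕ) (hi : i + 1 < h),
      r ⟨i + 1, hi⟩ = Eseq e n h m ⟨i, Nat.lt_of_succ_lt hi⟩ • r ⟨i, Nat.lt_of_succ_lt hi⟩
        + m ⟨i + 1, hi⟩ - m ⟨i, Nat.lt_of_succ_lt hi⟩) (k : ℕ) (hk : k < h) :
    r ⟨k, hk⟩ - m ⟨k, hk⟩ ∈ prefixLattice n m k ∧ prefixLattice n r k = prefixLattice n m k := by
  induction k with
  | zero =>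
    refine ⟨?_, by rw [prefixLattice_zero, prefixLattice_zero]⟩
    rw [hr0 hk, sub_self]
    exact zero_mem _
  | succ k ih =>
    have hk' : k < h := Nat.lt_of_succ_lt hk
    obtain ⟨hrm, hspan⟩ := ih hk'
    have hE := (smul_mem_prefixLattice_iff n hn m hk' hrm _).mpr dvd_rfl
    refine ⟨?_, ?_⟩
    · rw [prefixLattice_succ n m hk', hrrec k hk, add_sub_right_comm, add_sub_cancel_right]
      exact sub_mem (mem_sup_left hE) (mem_sup_right (mem_span_singleton_self _))
    · rw [prefixLattice_succ n r hk', prefixLattice_succ n m hk', hspan,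
        sup_span_singleton_eq_of_sub_mem hrm]

end CharacteristicSequences

/-- for the characteristic exponents `m₁ < ⋯ < m_h` of a free
polynomial of degree `n`, with GCD-sequence `D`, `e`-sequence `e_i = D_i/D_{i+1}`
and `r`-sequence `r₁ = m₁`, `r_i = e_{i-1}r_{i-1} + m_i - m_{i-1}`, one has
`e_i·r_i ∈ (nℤ)^e + ∑_{j<i} r_jℤ` and `α·r_i ∉ (nℤ)^e + ∑_{j<i} r_jℤ` for all
`1 ≤ α < e_i`. -/
theorem stmt_11 (e n h : ℕ) (hn : 0 < n)
    (m r : Fin h → Fin e → ℤ)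
    (hr0 : ∀ hh : 0 < h, r ⟨0, hh⟩ = m ⟨0, hh⟩)
    (hrrec : ∀ (i : ℕ) (hi : i + 1 < h),
      r ⟨i + 1, hi⟩ = Eseq e n h m ⟨i, Nat.lt_of_succ_lt hi⟩ • r ⟨i, Nat.lt_of_succ_lt hi⟩
        + m ⟨i + 1, hi⟩ - m ⟨i, Nat.lt_of_succ_lt hi⟩) :
    ∀ i : Fin h,
      Eseq e n h m i • r i ∈
        latticeSpan e n (fun j : Fin i.val => r ⟨j.val, j.2.trans i.2⟩) ∧
      ∀ α : ℤ, 1 ≤ α → α < Eseq e n h m i →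
        α • r i ∉ latticeSpan e n (fun j : Fin i.val => r ⟨j.val, j.2.trans i.2⟩) := by
  intro i
  obtain ⟨hrm, hspan⟩ := rSeq_sub_mem_and_prefixLattice_eq n hn.ne' m r hr0 hrrec i i.2
  have hiff : ∀ α : ℤ, α • r i ∈ latticeSpan e n (fun j : Fin i.val => r ⟨j.val, j.2.trans i.2⟩)
      ↔ Eseq e n h m i ∣ α := fun α => by
    rw [latticeSpan_eq_prefixLattice n r i.2.le, hspan, SetLike.mem_coe]
    exact smul_mem_prefixLattice_iff n hn.ne' m i.2 hrm α
  refine ⟨(hiff _).mpr dvd_rfl, fun α hα₁ hα₂ hmem => ?_⟩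
  exact hα₂.not_ge (Int.le_of_dvd (by omega) ((hiff α).mp hmem))
end

section
/- Let f be a free polynomial of degree n with root y, characteristic exponents m₁ < ... < m_h, d-sequence (d_i), and r-sequence (r_i). Let y_{<m_i} be the truncation of y below m_i and G_i its minimal polynomial over L (the i-th pseudo root). Then O(f(x, y_{<m_i}(x))) = r_i·d_i/n, and consequently O(f, G_i) = r_i. -/
open Classical in
noncomputable def truncBelow {e : ℕ} {K : Type*} [Zero K]
    (le : (Fin e → ℤ) → (Fin e → ℤ) → Prop) (y : (Fin e → ℤ) → K) (μ : Fin e → ℤ) :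
    (Fin e → ℤ) → K :=
  fun p => if le p μ ∧ p ≠ μ then y p else 0

def AgreesBelow {e : ℕ} {K : Type*} (le : (Fin e → ℤ) → (Fin e → ℤ) → Prop)
    (y z : (Fin e → ℤ) → K) (μ : Fin e → ℤ) : Prop :=
  ∀ q, y q ≠ z q → le μ q

theorem rel_of_not_rel_and_ne {α : Type*} {r : α → α → Prop} [Std.Total r] {a b : α}
    (h : ¬(r a b ∧ a ≠ b)) : r b a := by
  by_cases hab : a = b
  · exact hab ▸ refl_of r a
  · exact (total_of r a b).resolve_left fun hr => h ⟨hr, hab⟩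

section Truncation

variable {e : ℕ} {K : Type*} {le : (Fin e → ℤ) → (Fin e → ℤ) → Prop}

theorem IsOrd.eq [Zero K] [Std.Antisymm le] {z : (Fin e → ℤ) → K} {p q : Fin e → ℤ}
    (hp : IsOrd le z p) (hq : IsOrd le z q) : p = q :=
  antisymm_of le (hp.2 q hq.1) (hq.2 p hp.1)

theorem truncBelow_of_rel_of_ne [Zero K] {y : (Fin e → ℤ) → K} {μ p : Fin e → ℤ}
    (h : le p μ ∧ p ≠ μ) : truncBelow le y μ p = y p :=
  if_pos h

theorem eq_truncBelow [Zero K] {t y : (Fin e → ℤ) → K} {μ : Fin e → ℤ}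
    (ht : ∀ p, (le p μ ∧ p ≠ μ → t p = y p) ∧ (¬(le p μ ∧ p ≠ μ) → t p = 0)) :
    t = truncBelow le y μ := by
  funext p
  unfold truncBelow
  split_ifs with hp
  exacts [(ht p).1 hp, (ht p).2 hp]

theorem AgreesBelow.mono [IsTrans _ le] {y z : (Fin e → ℤ) → K} {μ ν : Fin e → ℤ}
    (h : AgreesBelow le y z μ) (hνμ : le ν μ) : AgreesBelow le y z ν :=
  fun q hq => trans_of le hνμ (h q hq)

variable [AddGroup K] {y z : (Fin e → ℤ) → K} {μ ν : Fin e → ℤ}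

theorem agreesBelow_of_isOrd [IsTrans _ le] (h : IsOrd le (y - z) ν) (hμν : le μ ν) :
    AgreesBelow le y z μ :=
  fun q hq => trans_of le hμν (h.2 q (sub_ne_zero.mpr hq))

theorem isOrd_truncBelow_sub_of_agreesBelow [Std.Total le] (hz : z μ ≠ 0)
    (h : AgreesBelow le y z μ) : IsOrd le (truncBelow le y μ - z) μ := by
  refine ⟨by simpa [truncBelow] using hz, fun q hq => ?_⟩
  by_cases hqμ : le q μ ∧ q ≠ μ
  · rw [Pi.sub_apply, truncBelow_of_rel_of_ne hqμ] at hq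
    exact h q (sub_ne_zero.mp hq)
  · exact rel_of_not_rel_and_ne hqμ

theorem isOrd_truncBelow_sub_of_rel_of_ne [IsTrans _ le] [Std.Total le]
    (h : IsOrd le (y - z) ν) (hνμ : le ν μ ∧ ν ≠ μ) : IsOrd le (truncBelow le y μ - z) ν := by
  refine ⟨by simpa [truncBelow_of_rel_of_ne hνμ] using h.1, fun q hq => ?_⟩
  by_cases hqμ : le q μ ∧ q ≠ μ
  · rw [Pi.sub_apply, truncBelow_of_rel_of_ne hqμ] at hq
    exact h.2 q hq
  · exact trans_of le hνμ.1 (rel_of_not_rel_and_ne hqμ)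

theorem isOrd_truncBelow_sub_of_rel [IsTrans _ le] [Std.Total le]
    (h : IsOrd le (y - z) ν) (hz : z ν ≠ 0) (hνμ : le ν μ) :
    IsOrd le (truncBelow le y μ - z) ν := by
  by_cases hν : ν = μ
  · subst hν
    exact isOrd_truncBelow_sub_of_agreesBelow hz (agreesBelow_of_isOrd h (refl_of le ν))
  · exact isOrd_truncBelow_sub_of_rel_of_ne h ⟨hνμ, hν⟩

end Truncation

section Levels

variable {e h n : ℕ} {K : Type*} [AddGroup K] {le : (Fin e → ℤ) → (Fin e → ℤ) → Prop}
  [IsTrans _ le] {m : Fin h → Fin e → ℤ} {y₀ : (Fin e → ℤ) → K}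
  {y : Fin n → (Fin e → ℤ) → K}

theorem agreesBelow_of_forall_le (hm : ∀ ⦃i j⦄, i ≤ j → le (m i) (m j))
    (hords : ∀ k, y k ≠ y₀ → ∃ j, IsOrd le (y₀ - y k) (m j))
    {j₀ : Fin h} (hj₀ : ∀ j, j₀ ≤ j) (k : Fin n) : AgreesBelow le y₀ (y k) (m j₀) := by
  intro q hq
  obtain ⟨j, hj⟩ := hords k fun hy => hq (by rw [hy])
  exact agreesBelow_of_isOrd hj (hm (hj₀ j)) q hq

open Classical in
theorem IsOrd.truncBelow_sub_succ [Std.Total le] [Std.Antisymm le]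
    (hm : ∀ ⦃i j⦄, i ≤ j → le (m i) (m j))
    (hym : ∀ k j, y k (m j) ≠ 0) (hords : ∀ k, y k ≠ y₀ → ∃ j, IsOrd le (y₀ - y k) (m j))
    {i j : Fin h} (hij : (i : ℕ) + 1 = j) {k : Fin n} {o : Fin e → ℤ}
    (ho : IsOrd le (truncBelow le y₀ (m i) - y k) o) :
    IsOrd le (truncBelow le y₀ (m j) - y k)
      (o + if AgreesBelow le y₀ (y k) (m j) then m j - m i else 0) := by
  split_ifs with hA
  · have hAi : AgreesBelow le y₀ (y k) (m i) := hA.mono (hm (by omega))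
    rw [ho.eq (isOrd_truncBelow_sub_of_agreesBelow (hym k i) hAi), add_sub_cancel]
    exact isOrd_truncBelow_sub_of_agreesBelow (hym k j) hA
  · obtain ⟨l, hl⟩ := hords k fun hy => hA fun q hq => absurd (by rw [hy]) hq
    have hli : l ≤ i := by
      by_contra! hil
      exact hA (agreesBelow_of_isOrd hl (hm (by omega)))
    rw [add_zero, ho.eq (isOrd_truncBelow_sub_of_rel hl (hym k l) (hm hli))]
    exact isOrd_truncBelow_sub_of_rel hl (hym k l) (hm (hli.trans (by omega)))

theorem sum_ite_eq_natCard_zsmul {ι M : Type*} [Fintype ι] [AddCommGroup M] (p : ι → Prop)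
    [DecidablePred p] (a : M) : ∑ i, (if p i then a else 0) = (Nat.card {i // p i} : ℤ) • a := by
  rw [Finset.sum_ite, Finset.sum_const_zero, add_zero, Finset.sum_const, natCast_zsmul,
    Nat.card_eq_fintype_card, Fintype.card_subtype]

theorem exists_isOrd_truncBelow_sub_and_sum_eq [Std.Total le] [Std.Antisymm le]
    (hm : ∀ ⦃i j⦄, i ≤ j → le (m i) (m j)) (hym : ∀ k j, y k (m j) ≠ 0)
    (hords : ∀ k, y k ≠ y₀ → ∃ j, IsOrd le (y₀ - y k) (m j))
    {d : Fin (h + 1) → ℤ} {E : Fin h → ℤ} (hE : ∀ j : Fin h, d j.castSucc = E j * d j.succ)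
    (hcount : ∀ j : Fin h,
      (Nat.card {k : Fin n // AgreesBelow le y₀ (y k) (m j)} : ℤ) = d j.castSucc)
    {r : Fin h → Fin e → ℤ} (hr0 : ∀ hh : 0 < h, r ⟨0, hh⟩ = m ⟨0, hh⟩)
    (hrrec : ∀ (i : ℕ) (hi : i + 1 < h),
      r ⟨i + 1, hi⟩ = E ⟨i, Nat.lt_of_succ_lt hi⟩ • r ⟨i, Nat.lt_of_succ_lt hi⟩
        + m ⟨i + 1, hi⟩ - m ⟨i, Nat.lt_of_succ_lt hi⟩) (i : ℕ) (hi : i < h) :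
    ∃ o : Fin n → Fin e → ℤ, (∀ k, IsOrd le (truncBelow le y₀ (m ⟨i, hi⟩) - y k) (o k)) ∧
      ∑ k, o k = d (Fin.castSucc ⟨i, hi⟩) • r ⟨i, hi⟩ := by
  induction i with
  | zero =>
    have hA := agreesBelow_of_forall_le hm hords (j₀ := ⟨0, hi⟩) fun j => Nat.zero_le j
    refine ⟨fun _ => m ⟨0, hi⟩, fun k => isOrd_truncBelow_sub_of_agreesBelow (hym k _) (hA k), ?_⟩
    have hn : (n : ℤ) = d (Fin.castSucc ⟨0, hi⟩) := by
      rw [← hcount, Nat.card_congr (Equiv.subtypeUnivEquiv hA), Nat.card_eq_fintype_card,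
        Fintype.card_fin]
    rw [Finset.sum_const, Finset.card_univ, Fintype.card_fin, ← natCast_zsmul, hn, hr0]
  | succ i ih =>
    obtain ⟨o, ho, hsum⟩ := ih (Nat.lt_of_succ_lt hi)
    refine ⟨_, fun k => (ho k).truncBelow_sub_succ hm hym hords rfl, ?_⟩
    rw [Finset.sum_add_distrib, hsum, sum_ite_eq_natCard_zsmul, hcount, hrrec i hi, hE,
      Fin.succ_mk, Fin.castSucc_mk]
    module

end Levels

/-- let `f` be a free polynomial of degree `n` with conjugate
roots `y = y₁,...,y_n`, characteristic exponents `m₁ < ⋯ < m_h`, `d`-sequence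
`d₁,...,d_{h+1}` (with `d_i = e_i d_{i+1}`, `#{k : O(y-y_k) ≥ m_i} = d_i`) and
`r`-sequence `r₁ = m₁`, `r_{i+1} = e_i r_i + m_{i+1} - m_i`.  If `t` is the
truncation `y_{<m_i}` of `y` below `m_i`, then since
`f(x, y_{<m_i}) = ∏_k (y_{<m_i} - y_k)`, the order of `f(x, y_{<m_i})` is
`∑_k O(y_{<m_i} - y_k) = d_i r_i` (in numerators of exponents `p/n`, i.e.
`O(f(x,y_{<m_i})) = r_i d_i / n`), whence `O(f, G_i) = (n/d_i)·O(f(x,y_{<m_i})) = r_i`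
for the `i`-th pseudo root `G_i`. -/
theorem stmt_15 (K : Type*) [Field K] (e n h : ℕ) (hn : 0 < n)
    (le : (Fin e → ℤ) → (Fin e → ℤ) → Prop) (hlin : IsLinearOrder (Fin e → ℤ) le)
    (y : Fin n → ((Fin e → ℤ) → K))
    (hsupp : ∀ k p, y k p ≠ 0 ↔ y ⟨0, hn⟩ p ≠ 0)
    (m : Fin h → Fin e → ℤ)
    (hmono : ∀ i j : Fin h, i < j → le (m i) (m j) ∧ m i ≠ m j)
    (hsuppm : ∀ j, y ⟨0, hn⟩ (m j) ≠ 0)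
    (hords : ∀ k, y k ≠ y ⟨0, hn⟩ →
      ∃ j, IsOrd le (fun p => y ⟨0, hn⟩ p - y k p) (m j))
    (d : Fin (h + 1) → ℤ) (E : Fin h → ℤ)
    (hE : ∀ j : Fin h, d j.castSucc = E j * d j.succ)
    (hcount : ∀ j : Fin h,
      (Nat.card {k : Fin n // ∀ q, y ⟨0, hn⟩ q ≠ y k q → le (m j) q} : ℤ) = d j.castSucc)
    (r : Fin h → Fin e → ℤ)
    (hr0 : ∀ hh : 0 < h, r ⟨0, hh⟩ = m ⟨0, hh⟩)
    (hrrec : ∀ (i : ℕ) (hi : i + 1 < h),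
      r ⟨i + 1, hi⟩ = E ⟨i, Nat.lt_of_succ_lt hi⟩ • r ⟨i, Nat.lt_of_succ_lt hi⟩
        + m ⟨i + 1, hi⟩ - m ⟨i, Nat.lt_of_succ_lt hi⟩) :
    ∀ i : Fin h, ∀ t : (Fin e → ℤ) → K,
      (∀ p, (le p (m i) ∧ p ≠ m i → t p = y ⟨0, hn⟩ p) ∧
            (¬(le p (m i) ∧ p ≠ m i) → t p = 0)) →
      ∀ o : Fin n → (Fin e → ℤ),
        (∀ k, IsOrd le (fun p => t p - y k p) (o k)) →
        ∑ k, o k = d i.castSucc • r i := by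
  intro i t ht o ho
  have hm : ∀ ⦃i j : Fin h⦄, i ≤ j → le (m i) (m j) := fun i j hij =>
    hij.lt_or_eq.elim (fun hlt => (hmono i j hlt).1) fun heq => heq ▸ refl_of le (m i)
  obtain ⟨o', ho', hsum⟩ := exists_isOrd_truncBelow_sub_and_sum_eq hm
    (fun k j => (hsupp k (m j)).mpr (hsuppm j)) hords hE hcount hr0 hrrec i i.2
  rw [← hsum]
  refine Finset.sum_congr rfl fun k _ => (ho k).eq ?_
  rw [eq_truncBelow ht]
  exact ho' k
end

section
/- Let (r₀^1,...,r₀^e) = n·(standard basis of ℤ^e) and r₁,...,r_h ∈ ℤ^e be such that for each i, eᵢrᵢ ∈ (nℤ)^e + Σ_{j<i} r_jℤ and αrᵢ ∉ (nℤ)^e + Σ_{j<i} r_jℤ for 1 ≤ α < eᵢ. If α = (α₀^1,...,α₀^e,α₁,...,α_h) and β = (β₀^1,...,β₀^e,β₁,...,β_h) in ℤ^e × ℕ^h satisfy 0 ≤ αᵢ, βᵢ < eᵢ for i ∈ {1,...,h} and Σᵢ α₀^i r₀^i + Σⱼ αⱼrⱼ = Σᵢ β₀^i r₀^i + Σⱼ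 βⱼrⱼ, then α = β. -/
/-- uniqueness of bounded expansions.  If
`(r₀^1,...,r₀^e) = n·(standard basis)` and `r₁,...,r_h` satisfy
`e_i r_i ∈ (nℤ)^e + ∑_{j<i} r_jℤ` and `α r_i ∉ (nℤ)^e + ∑_{j<i} r_jℤ` for
`1 ≤ α < e_i`, then two expansions `∑ α₀^i r₀^i + ∑ α_j r_j` with digits
`0 ≤ α_j < e_j` representing the same vector are equal. -/
theorem stmt_16 (e n h : ℕ) (hn : 0 < n) (E : Fin h → ℤ)
    (r : Fin h → Fin e → ℤ)
    (hmem : ∀ i : Fin h, E i • r i ∈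
      latticeSpan e n (fun j : Fin i.val => r ⟨j.val, j.2.trans i.2⟩))
    (hnot : ∀ i : Fin h, ∀ α : ℤ, 1 ≤ α → α < E i →
      α • r i ∉ latticeSpan e n (fun j : Fin i.val => r ⟨j.val, j.2.trans i.2⟩))
    (a0 b0 : Fin e → ℤ) (a b : Fin h → ℕ)
    (ha : ∀ i, (a i : ℤ) < E i) (hb : ∀ i, (b i : ℤ) < E i)
    (heq : (n : ℤ) • a0 + ∑ j, (a j : ℤ) • r j
         = (n : ℤ) • b0 + ∑ j, (b j : ℤ) • r j) :
    a0 = b0 ∧ a = b := by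
  have hab : a = b := by
    by_contra hne
    set d : Fin h → ℤ := fun j => (b j : ℤ) - a j with hd
    have hsum : ∑ j, d j • r j = (n : ℤ) • (a0 - b0) := by
      funext x
      have h1 := congrFun heq x
      simp only [Pi.add_apply, Pi.smul_apply, Finset.sum_apply, smul_eq_mul] at h1
      simp only [Finset.sum_apply, Pi.smul_apply, Pi.sub_apply, smul_eq_mul, hd]
      have hx : ∑ j, ((b j : ℤ) - a j) * r j x
          = ∑ j, (b j : ℤ) * r j x - ∑ j, (a j : ℤ) * r j x := by
        rw [← Finset.sum_sub_distrib]
        exact Finset.sum_congr rfl fun j _ => by ring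
      rw [hx]; linarith
    obtain ⟨i0, hi0⟩ : ∃ j, a j ≠ b j := by
      by_contra hc; push_neg at hc; exact hne (funext hc)
    set S := Finset.univ.filter (fun j : Fin h => d j ≠ 0) with hS
    have hSne : S.Nonempty := by
      refine ⟨i0, ?_⟩
      simp only [hS, Finset.mem_filter, Finset.mem_univ, true_and, hd]
      intro hc
      exact hi0 ((Nat.cast_inj.mp (sub_eq_zero.mp hc)).symm)
    set i := S.max' hSne with hi
    have hiS : i ∈ S := S.max'_mem hSne
    have hdi : d i ≠ 0 := by
      simpa only [hS, Finset.mem_filter, Finset.mem_univ, true_and] using hiS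
    have hgt : ∀ j : Fin h, i < j → d j = 0 := by
      intro j hj
      by_contra hc
      exact absurd (S.le_max' j (by simp [hS, hc])) (not_le.mpr hj)
    set F : ℕ → (Fin e → ℤ) :=
      fun k => if hk : k < h then d ⟨k, hk⟩ • r ⟨k, hk⟩ else 0 with hF
    have h2 : ∑ j : Fin h, d j • r j = ∑ k ∈ Finset.range h, F k := by
      rw [← Fin.sum_univ_eq_sum_range F h]
      exact Finset.sum_congr rfl fun j _ => by simp [hF]
    have h3 : ∑ k ∈ Finset.range h, F k = ∑ k ∈ Finset.range (i.val + 1), F k := by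
      refine (Finset.sum_subset (Finset.range_subset_range.mpr i.2) ?_).symm
      intro k hk hnk
      simp only [Finset.mem_range] at hk hnk
      have hik : i < (⟨k, hk⟩ : Fin h) := by
        simp only [Fin.lt_def]; omega
      simp only [hF]
      rw [dif_pos hk, hgt _ hik, zero_smul]
    have h4 : ∑ k ∈ Finset.range (i.val + 1), F k
        = (∑ j : Fin i.val, d ⟨j.val, j.2.trans i.2⟩ • r ⟨j.val, j.2.trans i.2⟩)
          + d i • r i := by
      rw [Finset.sum_range_succ]
      congr 1
      · rw [← Fin.sum_univ_eq_sum_range F i.val]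
        exact Finset.sum_congr rfl fun j _ => by simp [hF, j.2.trans i.2]
      · simp [hF, i.2]
    have hmem' : d i • r i = (n : ℤ) • (a0 - b0)
        + ∑ j : Fin i.val, (-(d ⟨j.val, j.2.trans i.2⟩)) • r ⟨j.val, j.2.trans i.2⟩ := by
      have h5 := hsum
      rw [h2, h3, h4] at h5
      have h6 := eq_sub_of_add_eq' h5
      rw [h6, sub_eq_add_neg]
      congr 1
      rw [← Finset.sum_neg_distrib]
      exact Finset.sum_congr rfl fun j _ => (neg_smul _ _).symm
    rcases lt_or_gt_of_ne hdi with hneg | hpos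
    · have h1le : (1 : ℤ) ≤ -d i := by linarith
      have hlt : -d i < E i := by
        have h7 := ha i
        have h8 : (0 : ℤ) ≤ (b i : ℤ) := Nat.cast_nonneg _
        simp only [hd]
        linarith
      refine hnot i (-d i) h1le hlt ⟨b0 - a0, fun j => d ⟨j.val, j.2.trans i.2⟩, ?_⟩
      rw [neg_smul, hmem', neg_add]
      congr 1
      · rw [smul_sub, smul_sub, neg_sub]
      · rw [← Finset.sum_neg_distrib]
        exact Finset.sum_congr rfl fun j _ => by rw [← neg_smul, neg_neg]
    · have h1le : (1 : ℤ) ≤ d i := hpos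
      have hlt : d i < E i := by
        have h7 := hb i
        have h8 : (0 : ℤ) ≤ (a i : ℤ) := Nat.cast_nonneg _
        simp only [hd]
        linarith
      exact hnot i (d i) h1le hlt
        ⟨a0 - b0, fun j => -(d ⟨j.val, j.2.trans i.2⟩), hmem'⟩
  subst hab
  refine ⟨?_, rfl⟩
  have h9 : (n : ℤ) • a0 = (n : ℤ) • b0 := add_right_cancel heq
  funext x
  have h10 := congrFun h9 x
  simp only [Pi.smul_apply, smul_eq_mul] at h10
  exact mul_left_cancel₀ (by exact_mod_cast hn.ne') h10
end

section
/- Let f ∈ K[[x₁,...,x_e]][y] be monic in y and let C = {c ∈ ℝ^e : c₁ ≥ -(c₂+...+c_e), cᵢ ≥ 0 for i ≥ 2}. Then f is irreducible in K_C[[x]][y] if and only if F(X₁,...,X_e,y) = f(X₁, X₂X₁, ..., X_eX₁, y) is irreducible in K[[X₁,...,X_e]][y]. -/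
/-!
On exponents, `X₁ = x₁`, `Xᵢ = xᵢx₁⁻¹` is the additive bijection
`a ↦ (a₁ - a₂ - ⋯ - a_e, a₂, …, a_e)` from `ℕ^e` onto the lattice points of `C`. Since `C` lies in
the nonnegative part of the order on `Γ`, this map is monotone, so reindexing coefficients along
it is an injective ring homomorphism `K[[X]] → K_C[[x]]` whose image consists exactly of the
series supported in `C`. It sends `F` to `f`, and a monic polynomial whose coefficients lie in the
image lifts to a monic polynomial of the same degree, so monic factorizations of `f` with
coefficients supported in `C` are exactly the images of monic factorizations of `F`.
-/

open Finset Function Polynomial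

theorem AddMonoidHom.monotone_of_map_nonneg {M N : Type*} [AddCommMonoid M] [PartialOrder M]
    [CanonicallyOrderedAdd M] [AddCommMonoid N] [PartialOrder N] [IsOrderedAddMonoid N]
    (f : M →+ N) (hf : ∀ a, 0 ≤ f a) : Monotone f := by
  intro a b hab
  obtain ⟨c, rfl⟩ := exists_add_of_le hab
  rw [map_add]
  exact le_add_of_nonneg_right (hf c)

namespace HahnSeries

variable {Γ Γ' R : Type*} [PartialOrder Γ] [PartialOrder Γ']

section Zero

variable [Zero R] {f : Γ → Γ'} (hf : Monotone f)

/-- `HahnSeries.embDomain` along a monotone map that need not be an order embedding. -/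
noncomputable def extendDomain (x : R⟦Γ⟧) : R⟦Γ'⟧ where
  coeff := extend f x.coeff 0
  isPWO_support' := (x.isPWO_support.image_of_monotone hf).mono support_extend_zero_subset

theorem support_extendDomain_subset (x : R⟦Γ⟧) : (extendDomain hf x).support ⊆ f '' x.support :=
  support_extend_zero_subset

theorem coeff_extendDomain (hfi : Injective f) (x : R⟦Γ⟧) (a : Γ) :
    (extendDomain hf x).coeff (f a) = x.coeff a :=
  hfi.extend_apply _ _ _

theorem coeff_extendDomain_of_notMem_range (x : R⟦Γ⟧) {b : Γ'} (hb : b ∉ Set.range f) :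
    (extendDomain hf x).coeff b = 0 :=
  extend_apply' _ _ _ hb

theorem extendDomain_injective (hfi : Injective f) : Injective (extendDomain (R := R) hf) :=
  fun x y hxy => HahnSeries.ext <| funext fun a => by
    rw [← coeff_extendDomain hf hfi, hxy, coeff_extendDomain hf hfi]

end Zero

section Semiring

variable [AddCommMonoid Γ] [AddCommMonoid Γ'] {f : Γ →+ Γ'} (hf : Monotone f)

theorem extendDomain_one [NonAssocSemiring R] (hfi : Injective f) :
    extendDomain hf (1 : R⟦Γ⟧) = 1 := by
  ext g
  by_cases hg : g ∈ Set.range f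
  · obtain ⟨g, rfl⟩ := hg
    rw [coeff_extendDomain hf hfi, coeff_one, coeff_one, ← map_zero f, hfi.eq_iff]
  · rw [coeff_extendDomain_of_notMem_range hf _ hg, coeff_one, if_neg]
    rintro rfl
    exact hg ⟨0, map_zero f⟩

variable [IsOrderedCancelAddMonoid Γ] [IsOrderedCancelAddMonoid Γ']

theorem extendDomain_mul [NonUnitalNonAssocSemiring R] (hfi : Injective f) (x y : R⟦Γ⟧) :
    extendDomain hf (x * y) = extendDomain hf x * extendDomain hf y := by
  ext g
  by_cases hg : g ∈ Set.range f
  · obtain ⟨g, rfl⟩ := hg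
    let F : Γ ↪ Γ' := ⟨f, hfi⟩
    rw [coeff_extendDomain hf hfi, coeff_mul, coeff_mul]
    trans ∑ ij ∈ (antidiagonal x.isPWO_support y.isPWO_support g).map (F.prodMap F),
        (extendDomain hf x).coeff ij.1 * (extendDomain hf y).coeff ij.2
    · simp [F, coeff_extendDomain hf hfi]
    apply sum_subset
    · rintro ⟨i, j⟩ hij
      simp only [mem_map, Finset.mem_antidiagonal, Embedding.coe_prodMap, Prod.exists,
        Prod.map_apply, Prod.mk.injEq, F, Embedding.coeFn_mk] at hij
      obtain ⟨i, j, ⟨hx, hy, rfl⟩, rfl, rfl⟩ := hij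
      simp only [Finset.mem_antidiagonal, mem_support, coeff_extendDomain hf hfi, map_add]
      exact ⟨hx, hy, trivial⟩
    · rintro ⟨_, _⟩ h1 h2
      contrapose! h2
      obtain ⟨i, _, rfl⟩ := support_extendDomain_subset hf _ (left_ne_zero_of_mul h2)
      obtain ⟨j, _, rfl⟩ := support_extendDomain_subset hf _ (right_ne_zero_of_mul h2)
      simp only [Finset.mem_antidiagonal, mem_support, coeff_extendDomain hf hfi, ← map_add,
        hfi.eq_iff] at h1
      simp only [mem_map, Finset.mem_antidiagonal, Embedding.coe_prodMap, Prod.exists,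
        Prod.map_apply, F, Embedding.coeFn_mk]
      exact ⟨i, j, h1, rfl⟩
  · rw [coeff_extendDomain_of_notMem_range hf _ hg, eq_comm]
    contrapose! hg
    obtain ⟨_, hi, _, hj, rfl⟩ := support_mul_subset ((mem_support _ _).2 hg)
    obtain ⟨i, _, rfl⟩ := support_extendDomain_subset hf _ hi
    obtain ⟨j, _, rfl⟩ := support_extendDomain_subset hf _ hj
    exact ⟨i + j, map_add f i j⟩

noncomputable def extendDomainRingHom [NonAssocSemiring R] (hfi : Injective f) :
    R⟦Γ⟧ →+* R⟦Γ'⟧ where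
  toFun := extendDomain hf
  map_one' := extendDomain_one hf hfi
  map_mul' := extendDomain_mul hf hfi
  map_zero' := by
    classical
    ext b
    simp only [extendDomain, coeff_zero, extend_def]
    split_ifs <;> rfl
  map_add' x y := by
    classical
    ext b
    simp only [extendDomain, coeff_add, extend_def]
    split_ifs <;> simp

end Semiring

end HahnSeries

namespace MvPowerSeries

variable {σ Γ R : Type*} [Finite σ] [AddCommMonoid Γ] [PartialOrder Γ]
  [IsOrderedCancelAddMonoid Γ] [Semiring R] {f : (σ →₀ ℕ) →+ Γ} (hfi : Injective f)
  (hf : Monotone f)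

noncomputable def toHahnSeries : MvPowerSeries σ R →+* HahnSeries Γ R :=
  (HahnSeries.extendDomainRingHom hf hfi).comp HahnSeries.toMvPowerSeries.symm.toRingHom

theorem coeff_toHahnSeries (P : MvPowerSeries σ R) (a : σ →₀ ℕ) :
    (toHahnSeries hfi hf P).coeff (f a) = coeff a P :=
  HahnSeries.coeff_extendDomain hf hfi _ a

theorem support_toHahnSeries_subset (P : MvPowerSeries σ R) :
    (toHahnSeries hfi hf P).support ⊆ Set.range f :=
  (HahnSeries.support_extendDomain_subset hf _).trans (Set.image_subset_range _ _)

theorem toHahnSeries_eq_of_coeff {P : MvPowerSeries σ R} {s : HahnSeries Γ R}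
    (hs : s.support ⊆ Set.range f) (h : ∀ a, s.coeff (f a) = coeff a P) :
    toHahnSeries hfi hf P = s := by
  ext b
  by_cases hb : b ∈ Set.range f
  · obtain ⟨a, rfl⟩ := hb
    rw [coeff_toHahnSeries, h]
  · have hP : b ∉ (toHahnSeries hfi hf P).support :=
      fun hmem => hb (support_toHahnSeries_subset hfi hf P hmem)
    rw [notMem_support.1 hP, notMem_support.1 fun hmem => hb (hs hmem)]

theorem toHahnSeries_injective : Injective (toHahnSeries (R := R) hfi hf) :=
  (HahnSeries.extendDomain_injective hf hfi).comp HahnSeries.toMvPowerSeries.symm.injective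

theorem mem_range_toHahnSeries_iff (s : HahnSeries Γ R) :
    s ∈ Set.range (toHahnSeries hfi hf) ↔ s.support ⊆ Set.range f :=
  ⟨fun ⟨P, hP⟩ => hP ▸ support_toHahnSeries_subset hfi hf P,
    fun hs => ⟨fun a => s.coeff (f a), toHahnSeries_eq_of_coeff hfi hf hs fun _ => rfl⟩⟩

end MvPowerSeries

theorem Polynomial.exists_monic_factorization_lifts_iff {A B : Type*} [Semiring A] [Semiring B]
    {T : A →+* B} (hT : Injective T) (F : A[X]) (n : ℕ) :
    (∃ g h : B[X], g.Monic ∧ h.Monic ∧ 0 < g.natDegree ∧ g.natDegree < n ∧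
        0 < h.natDegree ∧ h.natDegree < n ∧ g ∈ lifts T ∧ h ∈ lifts T ∧ F.map T = g * h) ↔
      ∃ G H : A[X], G.Monic ∧ H.Monic ∧ 0 < G.natDegree ∧ G.natDegree < n ∧
        0 < H.natDegree ∧ H.natDegree < n ∧ F = G * H := by
  constructor
  · rintro ⟨g, h, hg, hh, hg₀, hgn, hh₀, hhn, hgT, hhT, hFgh⟩
    obtain ⟨G, rfl, hGdeg, hG⟩ := lifts_and_natDegree_eq_and_monic hgT hg
    obtain ⟨H, rfl, hHdeg, hH⟩ := lifts_and_natDegree_eq_and_monic hhT hh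
    refine ⟨G, H, hG, hH, hGdeg ▸ hg₀, hGdeg ▸ hgn, hHdeg ▸ hh₀, hHdeg ▸ hhn, ?_⟩
    exact map_injective T hT (by rw [hFgh, Polynomial.map_mul])
  · rintro ⟨G, H, hG, hH, hG₀, hGn, hH₀, hHn, rfl⟩
    refine ⟨G.map T, H.map T, ?_⟩
    rw [natDegree_map_eq_of_injective hT, natDegree_map_eq_of_injective hT]
    exact ⟨hG.map T, hH.map T, hG₀, hGn, hH₀, hHn, ⟨G, rfl⟩, ⟨H, rfl⟩,
      Polynomial.map_mul T⟩

/-- Under `X_{i₀} = x_{i₀}`, `X_i = x_i x_{i₀}⁻¹` (`i ≠ i₀`) the monomial `X^a` becomes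
`x^(substExponent i₀ a)`. -/
def substExponent {σ : Type*} [Fintype σ] [DecidableEq σ] (i₀ : σ) :
    (σ →₀ ℕ) →+ (σ → ℤ) where
  toFun a i := if i = i₀ then (a i₀ : ℤ) - ∑ j ∈ univ.erase i₀, (a j : ℤ) else (a i : ℤ)
  map_zero' := by ext; simp
  map_add' a b := by
    funext i
    simp only [Pi.add_apply, Finsupp.coe_add, Nat.cast_add, sum_add_distrib]
    split_ifs <;> ring

section substExponent

variable {σ : Type*} [Fintype σ] [DecidableEq σ] (i₀ : σ)

theorem substExponent_apply_of_ne (a : σ →₀ ℕ) {i : σ} (hi : i ≠ i₀) :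
    substExponent i₀ a i = a i :=
  if_neg hi

theorem sum_substExponent (a : σ →₀ ℕ) : ∑ i, substExponent i₀ a i = a i₀ := by
  rw [← add_sum_erase _ _ (mem_univ i₀),
    sum_congr rfl fun j hj => substExponent_apply_of_ne i₀ a (ne_of_mem_erase hj)]
  simp [substExponent]

theorem substExponent_injective : Injective (substExponent i₀) := by
  intro a b hab
  have hsum := sum_substExponent i₀ a
  rw [hab, sum_substExponent] at hsum
  ext i
  by_cases hi : i = i₀
  · subst hi; exact_mod_cast hsum.symm
  · have := congr_fun hab i
    rwa [substExponent_apply_of_ne i₀ a hi, substExponent_apply_of_ne i₀ b hi,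
      Nat.cast_inj] at this

theorem mem_range_substExponent_iff (c : σ → ℤ) :
    c ∈ Set.range (substExponent i₀) ↔
      (∀ i, i ≠ i₀ → 0 ≤ c i) ∧ -(∑ i ∈ univ.erase i₀, c i) ≤ c i₀ := by
  constructor
  · rintro ⟨a, rfl⟩
    refine ⟨fun i hi => by simp [substExponent_apply_of_ne i₀ a hi], ?_⟩
    rw [neg_le_iff_add_nonneg', sum_erase_add _ _ (mem_univ i₀), sum_substExponent]
    positivity
  · rintro ⟨hc, hc₀⟩
    have hsum : 0 ≤ ∑ j, c j := by
      rw [← sum_erase_add _ _ (mem_univ i₀)]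
      linarith
    let a : σ →₀ ℕ :=
      Finsupp.equivFunOnFinite.symm fun i => (if i = i₀ then ∑ j, c j else c i).toNat
    have ha : ∀ i, i ≠ i₀ → (a i : ℤ) = c i := fun i hi => by
      simp [a, hi, hc i hi]
    have ha₀ : (a i₀ : ℤ) = ∑ j, c j := by simp [a, hsum]
    refine ⟨a, funext fun i => ?_⟩
    by_cases hi : i = i₀
    · rw [hi, substExponent, AddMonoidHom.coe_mk, ZeroHom.coe_mk, if_pos rfl, ha₀,
        sum_congr rfl fun j hj => ha j (ne_of_mem_erase hj), ← sum_erase_add _ _ (mem_univ i₀)]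
      ring
    · rw [substExponent_apply_of_ne i₀ a hi, ha i hi]

end substExponent

theorem stmt_19_general (K : Type*) [Field K] (e : ℕ) (he : 0 < e)
    (Γ : Type*) [AddCommGroup Γ] [LinearOrder Γ] [IsOrderedAddMonoid Γ] (φ : Γ ≃+ (Fin e → ℤ))
    (C : Set (Fin e → ℝ))
    (hC : C = {c | (∀ i : Fin e, i ≠ ⟨0, he⟩ → 0 ≤ c i) ∧
      -(∑ i ∈ Finset.univ.erase ⟨0, he⟩, c i) ≤ c ⟨0, he⟩})
    (hcompat : ∀ γ : Γ, (fun i => (φ γ i : ℝ)) ∈ C → 0 ≤ γ)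
    (n : ℕ)
    (f : Polynomial (HahnSeries Γ K))
    (hfsupp : ∀ k : ℕ, ∀ γ ∈ (f.coeff k).support, (fun i => (φ γ i : ℝ)) ∈ C)
    (F : Polynomial (MvPowerSeries (Fin e) K))
    (hcorr : ∀ (k : ℕ) (a : Fin e →₀ ℕ),
      MvPowerSeries.coeff (R := K) a (F.coeff k) =
        (f.coeff k).coeff (φ.symm (fun i =>
          if i = ⟨0, he⟩ then (a ⟨0, he⟩ : ℤ) - ∑ j ∈ Finset.univ.erase ⟨0, he⟩, (a j : ℤ)
          else (a i : ℤ)))) :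
    ((¬ ∃ g h : Polynomial (HahnSeries Γ K),
        g.Monic ∧ h.Monic ∧ 0 < g.natDegree ∧ g.natDegree < n ∧
        0 < h.natDegree ∧ h.natDegree < n ∧
        (∀ k : ℕ, ∀ γ ∈ (g.coeff k).support, (fun i => (φ γ i : ℝ)) ∈ C) ∧
        (∀ k : ℕ, ∀ γ ∈ (h.coeff k).support, (fun i => (φ γ i : ℝ)) ∈ C) ∧
        f = g * h) ↔
      (¬ ∃ G H : Polynomial (MvPowerSeries (Fin e) K),
        G.Monic ∧ H.Monic ∧ 0 < G.natDegree ∧ G.natDegree < n ∧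
        0 < H.natDegree ∧ H.natDegree < n ∧ F = G * H)) := by
  set i₀ : Fin e := ⟨0, he⟩
  set ι : (Fin e →₀ ℕ) →+ Γ := φ.symm.toAddMonoidHom.comp (substExponent i₀)
  have hcone : ∀ γ, (fun i => (φ γ i : ℝ)) ∈ C ↔ γ ∈ Set.range ι := fun γ => by
    rw [show γ ∈ Set.range ι ↔ φ γ ∈ Set.range (substExponent i₀) from
      exists_congr fun a => φ.symm_apply_eq, mem_range_substExponent_iff, hC, Set.mem_ofPred_eq]
    dsimp only
    norm_cast
  have hι : Injective ι := φ.symm.injective.comp (substExponent_injective i₀)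
  have hmono : Monotone ι := ι.monotone_of_map_nonneg fun a => hcompat _ ((hcone _).2 ⟨a, rfl⟩)
  set T := MvPowerSeries.toHahnSeries (R := K) hι hmono
  have hlifts : ∀ g : (HahnSeries Γ K)[X],
      (∀ k, ∀ γ ∈ (g.coeff k).support, (fun i => (φ γ i : ℝ)) ∈ C) ↔ g ∈ lifts T := fun g => by
    simp only [hcone, lifts_iff_coeff_lifts]
    exact forall_congr' fun k => (MvPowerSeries.mem_range_toHahnSeries_iff hι hmono _).symm
  have hFf : F.map T = f := by
    ext k : 1
    rw [coeff_map]
    exact MvPowerSeries.toHahnSeries_eq_of_coeff hι hmono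
      (fun γ hγ => (hcone γ).1 (hfsupp k γ hγ)) fun a => (hcorr k a).symm
  rw [← hFf]
  exact not_congr ((exists₂_congr fun g h => by rw [hlifts g, hlifts h]).trans
    (exists_monic_factorization_lifts_iff (MvPowerSeries.toHahnSeries_injective hι hmono) F n))

/-- let `f ∈ K[[x]][y]` be monic in `y`, viewed inside
`K_C[[x]][y]` for the line free cone
`C = {c : c₁ ≥ -(c₂+⋯+c_e), cᵢ ≥ 0 (i ≥ 2)}`, and let
`F(X,y) = f(X₁, X₂X₁, ..., X_eX₁, y)`.  Then `f` is irreducible in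
`K_C[[x]][y]` iff `F` is irreducible in `K[[X]][y]`.

The ring `K_C[[x]]` is modelled as the Hahn series over an abelian group `Γ`
identified with `ℤ^e` via `φ` and linearly ordered compatibly with `C`, with
support in `C`; `F` and `f` correspond via the exponent bijection
`c ↦ (c₁+⋯+c_e, c₂, ..., c_e)` of the substitution.  Irreducibility of a monic
polynomial of degree `n` is expressed as the nonexistence of a factorization
into two monic factors of degrees strictly between `0` and `n` (with
coefficients supported in `C`, on the `K_C[[x]]` side). -/
theorem stmt_19 (K : Type*) [Field K] (e : ℕ) (he : 0 < e)
    (Γ : Type*) [AddCommGroup Γ] [LinearOrder Γ] [IsOrderedAddMonoid Γ] (φ : Γ ≃+ (Fin e → ℤ))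
    (C : Set (Fin e → ℝ))
    (hC : C = {c | (∀ i : Fin e, i ≠ ⟨0, he⟩ → 0 ≤ c i) ∧
      -(∑ i ∈ Finset.univ.erase ⟨0, he⟩, c i) ≤ c ⟨0, he⟩})
    (hcompat : ∀ γ : Γ, (fun i => (φ γ i : ℝ)) ∈ C → 0 ≤ γ)
    (n : ℕ) (hn : 0 < n)
    (f : Polynomial (HahnSeries Γ K)) (hf : f.Monic) (hfdeg : f.natDegree = n)
    (hfsupp : ∀ k : ℕ, ∀ γ ∈ (f.coeff k).support, (fun i => (φ γ i : ℝ)) ∈ C)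
    (hfnat : ∀ k : ℕ, ∀ γ ∈ (f.coeff k).support, ∀ i : Fin e, 0 ≤ φ γ i)
    (F : Polynomial (MvPowerSeries (Fin e) K)) (hF : F.Monic) (hFdeg : F.natDegree = n)
    (hcorr : ∀ (k : ℕ) (a : Fin e →₀ ℕ),
      MvPowerSeries.coeff (R := K) a (F.coeff k) =
        (f.coeff k).coeff (φ.symm (fun i =>
          if i = ⟨0, he⟩ then (a ⟨0, he⟩ : ℤ) - ∑ j ∈ Finset.univ.erase ⟨0, he⟩, (a j : ℤ)
          else (a i : ℤ)))) :
    ((¬ ∃ g h : Polynomial (HahnSeries Γ K),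
        g.Monic ∧ h.Monic ∧ 0 < g.natDegree ∧ g.natDegree < n ∧
        0 < h.natDegree ∧ h.natDegree < n ∧
        (∀ k : ℕ, ∀ γ ∈ (g.coeff k).support, (fun i => (φ γ i : ℝ)) ∈ C) ∧
        (∀ k : ℕ, ∀ γ ∈ (h.coeff k).support, (fun i => (φ γ i : ℝ)) ∈ C) ∧
        f = g * h) ↔
      (¬ ∃ G H : Polynomial (MvPowerSeries (Fin e) K),
        G.Monic ∧ H.Monic ∧ 0 < G.natDegree ∧ G.natDegree < n ∧
        0 < H.natDegree ∧ H.natDegree < n ∧ F = G * H)) :=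
  stmt_19_general K e he Γ φ C hC hcompat n f hfsupp F hcorr
end
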